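/- arXiv:1504.00170 — 4 statements merged into one kernel-verified Lean document; each statement's English description precedes it below -/
import Mathlib

section
/- Let m ≥ 1 be an integer, δ > 0 and ξ ∈ ℝ^{2m}. The standard bubble U_{δ,ξ}(x) = log( 2^{2m+1} · m · (2m−1)! · δ^{2m} / (δ² + |x−ξ|²)^{2m} ) is smooth on ℝ^{2m} and satisfies the Liouville equation (−Δ)^m U_{δ,ξ} = e^{U_{δ,ξ}} at every point of ℝ^{2m}. -/
open MeasureTheory Real Filter
open scoped Topology

/-- The Laplacian `Δf(x) = ∑ i, ∂²f/∂x_i²(x)` of `f : ℝ^n → ℝ`. -/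
noncomputable def lap {n : ℕ} (f : EuclideanSpace ℝ (Fin n) → ℝ)
    (x : EuclideanSpace ℝ (Fin n)) : ℝ :=
  ∑ i : Fin n,
    fderiv ℝ (fun y => fderiv ℝ f y (EuclideanSpace.single i 1)) x (EuclideanSpace.single i 1)

/-- `(−Δ)^m f`, the `m`-fold iterate of `−Δ` applied to `f`. -/
noncomputable def negLapPow {n : ℕ} (m : ℕ) (f : EuclideanSpace ℝ (Fin n) → ℝ) :
    EuclideanSpace ℝ (Fin n) → ℝ :=
  (fun g x => -lap g x)^[m] f

/-- The standard bubble `U_{δ,ξ}`. -/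
noncomputable def bubble (m : ℕ) (δ : ℝ) (ξ : EuclideanSpace ℝ (Fin (2 * m)))
    (x : EuclideanSpace ℝ (Fin (2 * m))) : ℝ :=
  Real.log (2 ^ (2 * m + 1) * m * Nat.factorial (2 * m - 1) * δ ^ (2 * m) /
    (δ ^ 2 + ‖x - ξ‖ ^ 2) ^ (2 * m))

namespace BubbleLiouville

/-! ### Generalities: the Laplacian of a radial function -/

theorem hasFDerivAt_q {n : ℕ} (δ : ℝ) (ξ y : EuclideanSpace ℝ (Fin n)) :
    HasFDerivAt (fun z : EuclideanSpace ℝ (Fin n) => δ^2 + ‖z - ξ‖^2)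
      (2 • (innerSL ℝ (y - ξ))) y := by
  have h1 : HasFDerivAt (fun z : EuclideanSpace ℝ (Fin n) => z - ξ)
      (ContinuousLinearMap.id ℝ _) y := (hasFDerivAt_id y).sub_const ξ
  have h2 := h1.norm_sq
  simpa using h2.const_add (δ^2)

theorem sum_sq_eq {n : ℕ} (v : EuclideanSpace ℝ (Fin n)) :
    ∑ i : Fin n, (v i)^2 = ‖v‖^2 := by
  rw [EuclideanSpace.norm_eq, Real.sq_sqrt (by positivity)]
  simp [sq_abs]

theorem lap_radial {n : ℕ} (δ : ℝ) (hδ : 0 < δ) (ξ : EuclideanSpace ℝ (Fin n))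
    (φ φ' φ'' : ℝ → ℝ)
    (h1 : ∀ s, 0 < s → HasDerivAt φ (φ' s) s)
    (h2 : ∀ s, 0 < s → HasDerivAt φ' (φ'' s) s)
    (x : EuclideanSpace ℝ (Fin n)) :
    lap (fun y => φ (δ^2 + ‖y - ξ‖^2)) x
      = 4 * ‖x - ξ‖^2 * φ'' (δ^2 + ‖x - ξ‖^2) + 2*n*φ' (δ^2 + ‖x - ξ‖^2) := by
  have hqpos : ∀ y : EuclideanSpace ℝ (Fin n), 0 < δ^2 + ‖y - ξ‖^2 := fun y => by positivity
  have hf1 : ∀ y : EuclideanSpace ℝ (Fin n),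
      HasFDerivAt (fun z => φ (δ^2 + ‖z - ξ‖^2))
        ((φ' (δ^2 + ‖y - ξ‖^2)) • (2 • (innerSL ℝ (y - ξ)))) y := fun y =>
    (h1 _ (hqpos y)).comp_hasFDerivAt y (hasFDerivAt_q δ ξ y)
  have key1 : ∀ (i : Fin n) (y : EuclideanSpace ℝ (Fin n)),
      fderiv ℝ (fun z => φ (δ^2 + ‖z - ξ‖^2)) y (EuclideanSpace.single i 1)
        = φ' (δ^2 + ‖y - ξ‖^2) * (2 * (y i - ξ i)) := by
    intro i y
    rw [(hf1 y).fderiv]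
    simp [real_inner_comm, EuclideanSpace.inner_single_left, EuclideanSpace.inner_single_right]
  have hF : ∀ (i : Fin n),
      HasFDerivAt (fun y : EuclideanSpace ℝ (Fin n) => φ' (δ^2 + ‖y - ξ‖^2) * (2 * (y i - ξ i)))
        ((φ' (δ^2 + ‖x - ξ‖^2)) • (((2:ℝ)) • (EuclideanSpace.proj i : EuclideanSpace ℝ (Fin n) →L[ℝ] ℝ))
          + (2 * (x i - ξ i)) • ((φ'' (δ^2 + ‖x - ξ‖^2)) • (2 • (innerSL ℝ (x - ξ))))) x := by
    intro i
    have ha : HasFDerivAt (fun z => φ' (δ^2 + ‖z - ξ‖^2))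
        ((φ'' (δ^2 + ‖x - ξ‖^2)) • (2 • (innerSL ℝ (x - ξ)))) x :=
      (h2 _ (hqpos x)).comp_hasFDerivAt x (hasFDerivAt_q δ ξ x)
    have hb : HasFDerivAt (fun y : EuclideanSpace ℝ (Fin n) => 2 * (y i - ξ i))
        (((2:ℝ)) • (EuclideanSpace.proj i : EuclideanSpace ℝ (Fin n) →L[ℝ] ℝ)) x := by
      have := ((EuclideanSpace.proj (𝕜 := ℝ) i).hasFDerivAt (x := x)).sub_const (ξ i)
      simpa using this.const_mul 2
    exact ha.mul hb
  have lap_eq : lap (fun y => φ (δ^2 + ‖y - ξ‖^2)) x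
      = ∑ i : Fin n, (φ' (δ^2 + ‖x - ξ‖^2) * 2
          + φ'' (δ^2 + ‖x - ξ‖^2) * (2 * (x i - ξ i)) * (2 * (x i - ξ i))) := by
    unfold lap
    refine Finset.sum_congr rfl fun i _ => ?_
    have hfe : (fun y => fderiv ℝ (fun z => φ (δ^2 + ‖z - ξ‖^2)) y (EuclideanSpace.single i 1))
        = fun y => φ' (δ^2 + ‖y - ξ‖^2) * (2 * (y i - ξ i)) := funext (key1 i)
    rw [hfe, (hF i).fderiv]
    simp [real_inner_comm, EuclideanSpace.inner_single_left, EuclideanSpace.inner_single_right]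
    ring
  rw [lap_eq, Finset.sum_add_distrib, Finset.sum_const]
  have : ∑ i : Fin n, φ'' (δ^2 + ‖x - ξ‖^2) * (2 * (x i - ξ i)) * (2 * (x i - ξ i))
      = 4 * ‖x - ξ‖^2 * φ'' (δ^2 + ‖x - ξ‖^2) := by
    have h := sum_sq_eq (x - ξ)
    have hv : ∀ i, (x - ξ) i = x i - ξ i := fun i => rfl
    calc ∑ i : Fin n, φ'' (δ^2 + ‖x - ξ‖^2) * (2 * (x i - ξ i)) * (2 * (x i - ξ i))
        = 4 * (∑ i : Fin n, ((x - ξ) i)^2) * φ'' (δ^2 + ‖x - ξ‖^2) := by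
          rw [Finset.mul_sum, Finset.sum_mul]
          refine Finset.sum_congr rfl fun i _ => ?_
          rw [hv i]; ring
      _ = 4 * ‖x - ξ‖^2 * φ'' (δ^2 + ‖x - ξ‖^2) := by rw [h]
  rw [this]
  simp [Finset.card_univ]
  ring

/-! ### The coefficients -/

def ncoef (m k t : ℕ) : ℕ :=
  2 * m * 4 ^ k * k.factorial * Nat.ascFactorial (t + 1) (k - 1) * Nat.choose (m - 1 - t) (k - t)

lemma ncoef_one_zero (m : ℕ) : ncoef m 1 0 = 8 * m * (m - 1) := by
  simp [ncoef, Nat.choose_one_right]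
  left; ring

lemma ncoef_one_one (m : ℕ) : ncoef m 1 1 = 8 * m := by
  simp [ncoef]; ring

lemma ncoef_top (m : ℕ) (hm : 1 ≤ m) :
    ncoef m m m = 2 * m * 4 ^ m * Nat.factorial (2 * m - 1) := by
  have h1 : m - 1 - m = 0 := by omega
  have h2 : m - m = 0 := by omega
  have h3 : Nat.factorial m * Nat.ascFactorial (m + 1) (m - 1) = (2 * m - 1).factorial := by
    have := Nat.factorial_mul_ascFactorial m (m - 1)
    rw [this]; congr 1; omega
  calc ncoef m m m = 2 * m * 4 ^ m * (Nat.factorial m * Nat.ascFactorial (m + 1) (m - 1)) := by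
        simp [ncoef, h1, h2]; ring
    _ = 2 * m * 4 ^ m * Nat.factorial (2 * m - 1) := by rw [h3]

lemma ncoef_lt_top (m t : ℕ) (ht : t < m) : ncoef m m t = 0 := by
  have : Nat.choose (m - 1 - t) (m - t) = 0 := Nat.choose_eq_zero_of_lt (by omega)
  simp [ncoef, this]

lemma ncoef_rec_zero (m k : ℕ) (hk : 1 ≤ k) (hkm : k + 1 ≤ m) :
    (ncoef m (k + 1) 0 : ℤ) = 4 * k * ((m : ℤ) - k - 1) * ncoef m k 0 := by
  have e1 : Nat.ascFactorial 1 ((k + 1) - 1) = k * Nat.ascFactorial 1 (k - 1) := by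
    simp only [Nat.one_ascFactorial, Nat.add_sub_cancel]
    obtain ⟨k', rfl⟩ : ∃ k', k = k' + 1 := ⟨k - 1, by omega⟩
    simp [Nat.factorial_succ]
  have e4 := Nat.choose_succ_right_eq (m - 1) k
  have hMK : (m : ℤ) - 1 - k = ((m - 1 - k : ℕ) : ℤ) := by push_cast; omega
  have h4 : ((m - 1 : ℕ).choose (k + 1) : ℤ) * (k + 1) = (m - 1 : ℕ).choose k * ((m:ℤ) - 1 - k) := by
    rw [hMK]; exact_mod_cast e4
  have hsub : m - 1 - 0 = m - 1 := by omega
  simp only [ncoef, hsub, Nat.sub_zero, e1]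
  push_cast
  rw [Nat.factorial_succ]
  push_cast
  linear_combination (2 * (m:ℤ) * 4^(k+1) * k.factorial * (Nat.ascFactorial 1 (k-1)) * k) * h4

lemma ncoef_rec_top (m k : ℕ) (hk : 1 ≤ k) (hkm : k + 1 ≤ m) :
    (ncoef m (k + 1) (k + 1) : ℤ) = 4 * (k + (k+1) - 1) * (k + (k+1)) * ncoef m k k := by
  have e1 : Nat.factorial (k+1) * Nat.ascFactorial (k + 1 + 1) k = (2*k+1).factorial := by
    rw [Nat.factorial_mul_ascFactorial]; congr 1; omega
  have e2 : Nat.factorial k * Nat.ascFactorial (k + 1) (k - 1) = (2*k-1).factorial := by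
    rw [Nat.factorial_mul_ascFactorial]; congr 1; omega
  have e3 : (2*k+1).factorial = (2*k+1) * (2*k) * (2*k-1).factorial := by
    obtain ⟨k', rfl⟩ : ∃ k', k = k' + 1 := ⟨k - 1, by omega⟩
    rw [show 2*(k'+1)+1 = (2*k'+1)+1+1 by ring, Nat.factorial_succ, show (2*k'+1)+1 = 2*(k'+1) by ring,
      show 2*(k'+1) = (2*k'+1)+1 by ring, Nat.factorial_succ]
    simp [show 2*(k'+1)-1 = 2*k'+1 by omega]
    ring
  have c1 : k + 1 - (k + 1) = 0 := by omega
  have c2 : k - k = 0 := by omega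
  simp only [ncoef, c1, c2, Nat.choose_zero_right, mul_one, Nat.add_sub_cancel]
  push_cast
  have E1 : ((Nat.factorial (k+1) : ℤ)) * (Nat.ascFactorial (k + 1 + 1) k : ℤ) = ((2*k+1).factorial : ℤ) := by exact_mod_cast e1
  have E2 : ((Nat.factorial k : ℤ)) * (Nat.ascFactorial (k + 1) (k - 1) : ℤ) = ((2*k-1).factorial : ℤ) := by exact_mod_cast e2
  have E3 : ((2*k+1).factorial : ℤ) = (2*k+1) * (2*k) * ((2*k-1).factorial : ℤ) := by exact_mod_cast e3
  linear_combination (2*(m:ℤ)*4^(k+1)) * E1 + (2*(m:ℤ)*4^(k+1)) * E3 + (2*(m:ℤ)*4^(k+1)*(2*(k:ℤ)+1)*(2*k)) * E2 - (32*(m:ℤ)*(k:ℤ)*4^k + 64*(m:ℤ)*(k:ℤ)^2*4^k) * E2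

lemma ncoef_rec_mid (m k t : ℕ) (hk : 1 ≤ k) (hkm : k + 1 ≤ m) (ht : 1 ≤ t) (htk : t ≤ k) :
    (ncoef m (k + 1) t : ℤ) = 4 * ((k:ℤ) + t) * ((m : ℤ) - (k + t) - 1) * ncoef m k t
      + 4 * ((k:ℤ) + t - 1) * ((k:ℤ) + t) * ncoef m k (t - 1) := by
  obtain ⟨k', rfl⟩ : ∃ k', k = k' + 1 := ⟨k - 1, by omega⟩
  set A : ℕ := Nat.ascFactorial (t + 1) k' with hA
  set B : ℕ := Nat.ascFactorial t k' with hB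
  set c1 : ℕ := Nat.choose (m - 1 - t) (k' + 1 - t) with hc1
  set c2 : ℕ := Nat.choose (m - 1 - t) (k' + 1 - t + 1) with hc2
  have i1 : ncoef m (k' + 1 + 1) t = 2*m*4^(k'+2)*(Nat.factorial (k'+2)) * ((t + 1 + k') * A) * c2 := by
    simp only [ncoef, hA, Nat.add_sub_cancel]
    rw [show k' + 1 + 1 - t = (k' + 1 - t) + 1 by omega, Nat.ascFactorial_succ]
  have i2 : ncoef m (k' + 1) t = 2*m*4^(k'+1)*(Nat.factorial (k'+1)) * A * c1 := by
    simp only [ncoef, hA, hc1, Nat.add_sub_cancel]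
  have i3 : ncoef m (k' + 1) (t - 1) = 2*m*4^(k'+1)*(Nat.factorial (k'+1)) * B * (c1 + c2) := by
    simp only [ncoef, Nat.add_sub_cancel]
    rw [show t - 1 + 1 = t by omega, show m - 1 - (t - 1) = (m - 1 - t) + 1 by omega,
      show k' + 1 - (t - 1) = (k' + 1 - t) + 1 by omega, Nat.choose_succ_succ]
  have hsucc : t * A = (t + k') * B := Nat.succ_ascFactorial t k'
  have h4 := Nat.choose_succ_right_eq (m - 1 - t) (k' + 1 - t)
  have hMK : m - 1 - t - (k' + 1 - t) = m - 1 - (k' + 1) := by omega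
  rw [hMK] at h4
  -- cast everything
  have HB : (t : ℤ) * A = ((t : ℤ) + k') * B := by exact_mod_cast hsucc
  have H4 : (c2 : ℤ) * (((k' : ℤ) + 1 - t) + 1) = (c1 : ℤ) * ((m : ℤ) - 1 - (k' + 1)) := by
    have e1 : ((k' + 1 - t : ℕ) : ℤ) = (k' : ℤ) + 1 - t := by omega
    have e2 : ((m - 1 - (k' + 1) : ℕ) : ℤ) = (m : ℤ) - 1 - (k' + 1) := by omega
    have h5 : ((c2 * (k' + 1 - t + 1) : ℕ) : ℤ) = ((c1 * (m - 1 - (k' + 1)) : ℕ) : ℤ) := by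
      exact_mod_cast congrArg (Nat.cast : ℕ → ℤ) h4
    push_cast at h5
    rw [e1, e2] at h5
    linarith [h5]
  rw [i1, i2, i3]
  push_cast
  rw [Nat.factorial_succ (k'+1)]
  push_cast
  linear_combination (-(2*(m:ℤ)*4^(k'+2)*(Nat.factorial (k'+1))*((k':ℤ)+1+t)*((c1:ℤ)+c2))) * HB + ((2*(m:ℤ)*4^(k'+2)*(Nat.factorial (k'+1))*((k':ℤ)+1+t)*A)) * H4 + (64*(m:ℤ)*(Nat.factorial (k'+1))*4^k'*((k':ℤ)+t+1)*((c1:ℤ)+(c2:ℤ))) * HB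

/-! ### The one-dimensional radial profiles -/

noncomputable def Phi (m : ℕ) (δ : ℝ) (k : ℕ) (s : ℝ) : ℝ :=
  ∑ t ∈ Finset.range (k+1), (ncoef m k t : ℝ) * δ^(2*t) * s ^ (-((k+t : ℕ) : ℤ))

noncomputable def PhiD (m : ℕ) (δ : ℝ) (k : ℕ) (s : ℝ) : ℝ :=
  ∑ t ∈ Finset.range (k+1),
    ((ncoef m k t : ℝ) * δ^(2*t) * ((-((k+t : ℕ) : ℤ) : ℤ) : ℝ)) * s ^ (-((k+t : ℕ) : ℤ) - 1)

noncomputable def PhiDD (m : ℕ) (δ : ℝ) (k : ℕ) (s : ℝ) : ℝ :=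
  ∑ t ∈ Finset.range (k+1),
    ((ncoef m k t : ℝ) * δ^(2*t) * ((-((k+t : ℕ) : ℤ) : ℤ) : ℝ) * (((-((k+t : ℕ) : ℤ) : ℤ) : ℝ) - 1))
      * s ^ (-((k+t : ℕ) : ℤ) - 2)

lemma hasDerivAt_Phi (m : ℕ) (δ : ℝ) (k : ℕ) (s : ℝ) (hs : 0 < s) :
    HasDerivAt (Phi m δ k) (PhiD m δ k s) s := by
  have h : HasDerivAt (Phi m δ k)
      (∑ t ∈ Finset.range (k+1), (ncoef m k t : ℝ) * δ^(2*t)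
        * (((-((k+t : ℕ) : ℤ) : ℤ) : ℝ) * s ^ (-((k+t : ℕ) : ℤ) - 1))) s := by
    unfold Phi
    exact HasDerivAt.fun_sum fun t _ =>
      (hasDerivAt_zpow (-((k+t : ℕ) : ℤ)) s (Or.inl hs.ne')).const_mul _
  convert h using 1
  unfold PhiD
  exact Finset.sum_congr rfl fun t _ => by ring

lemma hasDerivAt_PhiD (m : ℕ) (δ : ℝ) (k : ℕ) (s : ℝ) (hs : 0 < s) :
    HasDerivAt (PhiD m δ k) (PhiDD m δ k s) s := by
  have h : HasDerivAt (PhiD m δ k)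
      (∑ t ∈ Finset.range (k+1), ((ncoef m k t : ℝ) * δ^(2*t) * ((-((k+t : ℕ) : ℤ) : ℤ) : ℝ))
        * (((-((k+t : ℕ) : ℤ) - 1 : ℤ) : ℝ) * s ^ (-((k+t : ℕ) : ℤ) - 1 - 1))) s := by
    unfold PhiD
    exact HasDerivAt.fun_sum fun t _ =>
      (hasDerivAt_zpow (-((k+t : ℕ) : ℤ) - 1) s (Or.inl hs.ne')).const_mul _
  convert h using 1
  unfold PhiDD
  refine Finset.sum_congr rfl fun t _ => ?_
  rw [show -((k+t : ℕ) : ℤ) - 1 - 1 = -((k+t : ℕ) : ℤ) - 2 by ring]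
  push_cast
  ring

/-! ### The one-dimensional recursion step -/

lemma phi_base (m : ℕ) (hm : 1 ≤ m) (δ R : ℝ) (hδ : 0 < δ) (hR : 0 ≤ R) :
    -(4 * R * ((2*m) * ((δ^2 + R)^2)⁻¹) + 2*(2*m) * (-(2*m) * (δ^2 + R)⁻¹))
      = Phi m δ 1 (δ^2 + R) := by
  have hQ : (0:ℝ) < δ^2 + R := by positivity
  have h0 : ncoef m 1 0 = 8 * m * (m-1) := ncoef_one_zero m
  have h1 : ncoef m 1 1 = 8 * m := ncoef_one_one m
  unfold Phi
  rw [Finset.sum_range_succ, Finset.sum_range_one, h0, h1]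
  have c0 : ((8 * m * (m-1) : ℕ) : ℝ) = 8 * m * ((m:ℝ) - 1) := by
    push_cast [Nat.cast_sub hm]; ring
  rw [c0]
  push_cast
  rw [show ((δ^2+R) ^ (-1 : ℤ)) = (δ^2+R)⁻¹ from zpow_neg_one _,
    show ((δ^2+R) ^ (-2 : ℤ)) = ((δ^2+R)^2)⁻¹ by
      rw [show ((-2:ℤ)) = -((2:ℕ):ℤ) by norm_num, zpow_neg, zpow_natCast]]
  field_simp
  ring

lemma phi_step (m k : ℕ) (hk : 1 ≤ k) (hkm : k + 1 ≤ m) (δ R : ℝ) (hδ : 0 < δ) (hR : 0 ≤ R) :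
    -(4 * R * PhiDD m δ k (δ^2 + R) + 2*(2*m) * PhiD m δ k (δ^2 + R))
      = Phi m δ (k+1) (δ^2 + R) := by
  have hQ : (0:ℝ) < δ^2 + R := by positivity
  set Q : ℝ := δ^2 + R with hQdef
  have hQne : Q ≠ 0 := hQ.ne'
  set F : ℕ → ℝ := fun t =>
    (4*((k:ℝ)+t)*((m:ℝ)-((k:ℝ)+t)-1) * (ncoef m k t : ℝ)) * δ^(2*t) * Q ^ (-((k+1+t : ℕ) : ℤ))
    with hF
  set G : ℕ → ℝ := fun t =>
    (4*((k:ℝ)+t)*((k:ℝ)+t+1) * (ncoef m k t : ℝ)) * δ^(2*(t+1)) * Q ^ (-((k+1+(t+1) : ℕ) : ℤ))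
    with hG
  have L : -(4 * R * PhiDD m δ k Q + 2*(2*m) * PhiD m δ k Q)
      = ∑ t ∈ Finset.range (k+1), (F t + G t) := by
    unfold PhiD PhiDD
    rw [Finset.mul_sum, Finset.mul_sum, ← Finset.sum_add_distrib, ← Finset.sum_neg_distrib]
    refine Finset.sum_congr rfl fun t ht => ?_
    have e1 : Q ^ (-((k+t : ℕ) : ℤ) - 1) = Q ^ (-((k+t : ℕ) : ℤ) - 2) * Q := by
      rw [← zpow_add_one₀ hQne]; congr 1; ring
    have e2 : Q ^ (-((k+1+t : ℕ) : ℤ)) = Q ^ (-((k+t : ℕ) : ℤ) - 2) * Q := by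
      rw [← zpow_add_one₀ hQne]; congr 1; push_cast; ring
    have e3 : Q ^ (-((k+1+(t+1) : ℕ) : ℤ)) = Q ^ (-((k+t : ℕ) : ℤ) - 2) := by
      congr 1; push_cast; ring
    rw [hF, hG]
    simp only []
    rw [e1, e2, e3]
    have hRQ : R = Q - δ^2 := by rw [hQdef]; ring
    rw [hRQ]
    push_cast
    ring
  rw [L]
  unfold Phi
  -- extended summands
  set Fh : ℕ → ℝ := fun t => if t ≤ k then F t else 0 with hFh
  set Gh : ℕ → ℝ := fun t => if 1 ≤ t then
      (4*((k:ℝ)+t-1)*((k:ℝ)+t) * (ncoef m k (t-1) : ℝ)) * δ^(2*t) * Q ^ (-((k+1+t : ℕ) : ℤ))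
    else 0 with hGh
  have hFsum : ∑ t ∈ Finset.range (k+1), F t = ∑ t ∈ Finset.range (k+2), Fh t := by
    rw [Finset.sum_range_succ (f := Fh) (n := k+1)]
    rw [show Fh (k+1) = 0 by simp [hFh]]
    rw [add_zero]
    refine Finset.sum_congr rfl fun t ht => ?_
    have : t ≤ k := by simpa using Nat.lt_succ_iff.mp (Finset.mem_range.mp ht)
    simp [hFh, this]
  have hGsum : ∑ t ∈ Finset.range (k+1), G t = ∑ t ∈ Finset.range (k+2), Gh t := by
    rw [Finset.sum_range_succ' (f := Gh) (n := k+1)]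
    rw [show Gh 0 = 0 by simp [hGh]]
    rw [add_zero]
    refine Finset.sum_congr rfl fun t ht => ?_
    have h1 : 1 ≤ t + 1 := by omega
    simp only [hGh, hG, if_pos h1, Nat.add_sub_cancel]
    push_cast
    ring
  rw [Finset.sum_add_distrib, hFsum, hGsum, ← Finset.sum_add_distrib]
  refine (Finset.sum_congr rfl fun t ht => ?_).symm
  have htk : t ≤ k + 1 := Nat.lt_succ_iff.mp (Finset.mem_range.mp ht)
  rcases Nat.eq_or_lt_of_le htk with h | h
  · -- t = k+1
    subst h
    have hz := ncoef_rec_top m k hk hkm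
    have hzr : ((ncoef m (k+1) (k+1) : ℕ) : ℝ)
        = 4 * ((k:ℝ) + ((k:ℝ)+1) - 1) * ((k:ℝ) + ((k:ℝ)+1)) * (ncoef m k k : ℝ) := by
      exact_mod_cast hz
    rw [hzr]
    have hf : Fh (k+1) = 0 := by simp [hFh]
    have hg : Gh (k+1) = (4*((k:ℝ)+(k+1)-1)*((k:ℝ)+(k+1)) * (ncoef m k k : ℝ))
        * δ^(2*(k+1)) * Q ^ (-((k+1+(k+1) : ℕ) : ℤ)) := by
      simp only [hGh, if_pos (by omega : 1 ≤ k+1), Nat.add_sub_cancel]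
      push_cast
      ring
    rw [hf, hg]
    push_cast
    ring
  · have htk' : t ≤ k := by omega
    have hf : Fh t = F t := by simp [hFh, htk']
    rcases Nat.eq_zero_or_pos t with h0 | h0
    · subst h0
      have hg : Gh 0 = 0 := by simp [hGh]
      have hz := ncoef_rec_zero m k hk hkm
      have hzr : ((ncoef m (k+1) 0 : ℕ) : ℝ)
          = 4 * (k:ℝ) * ((m:ℝ) - (k:ℝ) - 1) * (ncoef m k 0 : ℝ) := by exact_mod_cast hz
      rw [hf, hg, hzr, hF]
      simp only []
      push_cast
      ring
    · have hg : Gh t = (4*((k:ℝ)+t-1)*((k:ℝ)+t) * (ncoef m k (t-1) : ℝ))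
          * δ^(2*t) * Q ^ (-((k+1+t : ℕ) : ℤ)) := by
        have h1 : 1 ≤ t := h0
        simp only [hGh]
        rw [if_pos h1]
      have hz := ncoef_rec_mid m k t hk hkm h0 htk'
      have hzr : ((ncoef m (k+1) t : ℕ) : ℝ)
          = 4 * ((k:ℝ) + t) * ((m:ℝ) - ((k:ℝ)+t) - 1) * (ncoef m k t : ℝ)
            + 4 * ((k:ℝ) + t - 1) * ((k:ℝ) + t) * (ncoef m k (t-1) : ℝ) := by
        exact_mod_cast hz
      rw [hf, hg, hzr, hF]
      simp only []
      push_cast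
      ring

/-! ### The main induction -/

lemma negLapPow_bubble (m : ℕ) (hm : 1 ≤ m) (δ : ℝ) (hδ : 0 < δ)
    (ξ : EuclideanSpace ℝ (Fin (2*m))) :
    ∀ k, 1 ≤ k → k ≤ m →
      negLapPow k (bubble m δ ξ) = fun x => Phi m δ k (δ^2 + ‖x - ξ‖^2) := by
  have hm' : (0:ℝ) < m := by exact_mod_cast hm
  have hA : (0:ℝ) < 2 ^ (2*m+1) * m * Nat.factorial (2*m-1) * δ^(2*m) := by
    have h1 : (0:ℝ) < Nat.factorial (2*m-1) := by exact_mod_cast (2*m-1).factorial_pos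
    have h2 : (0:ℝ) < 2 ^ (2*m+1) := by positivity
    have h3 : (0:ℝ) < δ^(2*m) := by positivity
    exact mul_pos (mul_pos (mul_pos h2 hm') h1) h3
  set φ0 : ℝ → ℝ := fun s =>
    Real.log (2 ^ (2*m+1) * m * Nat.factorial (2*m-1) * δ^(2*m) / s^(2*m)) with hφ0
  set φ0' : ℝ → ℝ := fun s => -(2*(m:ℝ)) * s⁻¹ with hφ0'
  set φ0'' : ℝ → ℝ := fun s => 2*(m:ℝ) * (s^2)⁻¹ with hφ0''
  have hbubble : bubble m δ ξ = fun x => φ0 (δ^2 + ‖x - ξ‖^2) := rfl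
  have h1 : ∀ s, 0 < s → HasDerivAt φ0 (φ0' s) s := by
    intro s hs
    have hd : HasDerivAt
        (fun u : ℝ => Real.log (2 ^ (2*m+1) * m * Nat.factorial (2*m-1) * δ^(2*m))
          - (2*(m:ℝ)) * Real.log u) (-(2*(m:ℝ)) * s⁻¹) s := by
      have := ((Real.hasDerivAt_log hs.ne').const_mul ((2*(m:ℝ)))).const_sub
        (Real.log (2 ^ (2*m+1) * m * Nat.factorial (2*m-1) * δ^(2*m)))
      refine this.congr_deriv ?_
      ring
    apply hd.congr_of_eventuallyEq
    filter_upwards [Ioi_mem_nhds hs] with u hu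
    have hu' : (0:ℝ) < u := hu
    rw [hφ0]
    simp only []
    rw [Real.log_div hA.ne' (pow_ne_zero _ hu'.ne'), Real.log_pow]
    push_cast
    ring
  have h2 : ∀ s, 0 < s → HasDerivAt φ0' (φ0'' s) s := by
    intro s hs
    have := (hasDerivAt_inv hs.ne').const_mul (-(2*(m:ℝ)))
    refine this.congr_deriv ?_
    rw [hφ0'']
    simp only []
    field_simp
  intro k
  induction k with
  | zero => intro h; omega
  | succ k ih =>
    intro _ hk1m
    rcases Nat.eq_zero_or_pos k with rfl | hk
    · -- base case : k = 1
      funext x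
      have hx : negLapPow 1 (bubble m δ ξ) x = -lap (bubble m δ ξ) x := rfl
      rw [hx, hbubble, lap_radial δ hδ ξ φ0 φ0' φ0'' h1 h2 x]
      have hb := phi_base m hm δ (‖x - ξ‖^2) hδ (by positivity)
      rw [hφ0', hφ0'']
      simp only []
      rw [show ((2*m : ℕ) : ℝ) = 2*(m:ℝ) by push_cast; ring]
      convert hb using 3 <;> push_cast <;> ring
    · -- inductive step
      have ih' := ih hk (by omega)
      funext x
      have hx : negLapPow (k+1) (bubble m δ ξ) x
          = -lap (negLapPow k (bubble m δ ξ)) x := by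
        rw [negLapPow, Function.iterate_succ_apply']
        rfl
      rw [hx, ih', lap_radial δ hδ ξ (Phi m δ k) (PhiD m δ k) (PhiDD m δ k)
        (fun s hs => hasDerivAt_Phi m δ k s hs) (fun s hs => hasDerivAt_PhiD m δ k s hs) x]
      have hb := phi_step m k hk (by omega) δ (‖x - ξ‖^2) hδ (by positivity)
      rw [show ((2*m : ℕ) : ℝ) = 2*(m:ℝ) by push_cast; ring]
      convert hb using 3 <;> (try push_cast) <;> (try ring)

end BubbleLiouville

/-- The standard bubble is smooth and solves `(−Δ)^m U = e^U` on all of `ℝ^{2m}`. -/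
theorem bubble_solves_liouville (m : ℕ) (hm : 1 ≤ m) (δ : ℝ) (hδ : 0 < δ)
    (ξ : EuclideanSpace ℝ (Fin (2 * m))) :
    ContDiff ℝ (⊤ : ℕ∞) (bubble m δ ξ) ∧
      ∀ x, negLapPow m (bubble m δ ξ) x = Real.exp (bubble m δ ξ x) := by
  have hm' : (0:ℝ) < m := by exact_mod_cast hm
  have hA : (0:ℝ) < 2 ^ (2*m+1) * m * Nat.factorial (2*m-1) * δ^(2*m) := by
    have h1 : (0:ℝ) < Nat.factorial (2*m-1) := by exact_mod_cast (2*m-1).factorial_pos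
    have h2 : (0:ℝ) < 2 ^ (2*m+1) := by positivity
    have h3 : (0:ℝ) < δ^(2*m) := by positivity
    exact mul_pos (mul_pos (mul_pos h2 hm') h1) h3
  have hQpos : ∀ x : EuclideanSpace ℝ (Fin (2*m)), (0:ℝ) < δ^2 + ‖x - ξ‖^2 := fun x => by
    positivity
  have hargpos : ∀ x : EuclideanSpace ℝ (Fin (2*m)),
      (0:ℝ) < 2 ^ (2*m+1) * m * Nat.factorial (2*m-1) * δ^(2*m) / (δ^2 + ‖x - ξ‖^2)^(2*m) :=
    fun x => div_pos hA (pow_pos (hQpos x) _)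
  constructor
  · -- smoothness
    have hq : ContDiff ℝ (⊤ : WithTop ℕ∞) (fun x : EuclideanSpace ℝ (Fin (2*m)) => δ^2 + ‖x - ξ‖^2) :=
      contDiff_const.add ((contDiff_norm_sq ℝ).comp (contDiff_id.sub contDiff_const))
    have hdiv : ContDiff ℝ (⊤ : WithTop ℕ∞) (fun x : EuclideanSpace ℝ (Fin (2*m)) =>
        2 ^ (2*m+1) * (m:ℝ) * Nat.factorial (2*m-1) * δ^(2*m) / (δ^2 + ‖x - ξ‖^2)^(2*m)) :=
      ContDiff.div contDiff_const (hq.pow (2*m)) fun x => (pow_pos (hQpos x) _).ne'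
    exact (hdiv.log fun x => (hargpos x).ne').of_le le_top
  · intro x
    rw [BubbleLiouville.negLapPow_bubble m hm δ hδ ξ m hm le_rfl]
    have hexp : Real.exp (bubble m δ ξ x)
        = 2 ^ (2*m+1) * m * Nat.factorial (2*m-1) * δ^(2*m) / (δ^2 + ‖x - ξ‖^2)^(2*m) := by
      rw [bubble, Real.exp_log (hargpos x)]
    rw [hexp]
    unfold BubbleLiouville.Phi
    simp only []
    rw [Finset.sum_eq_single_of_mem m (Finset.self_mem_range_succ m)]
    · rw [BubbleLiouville.ncoef_top m hm]
      have h4 : ((2*m*4^m*Nat.factorial (2*m-1) : ℕ) : ℝ)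
          = 2*(m:ℝ)*4^m*(Nat.factorial (2*m-1) : ℝ) := by push_cast; ring
      rw [h4]
      rw [show (-((m+m : ℕ) : ℤ)) = -(((2*m : ℕ) : ℤ)) by push_cast; ring, zpow_neg,
        zpow_natCast]
      have h2 : (2:ℝ) ^ (2*m+1) = 2 * 4^m := by
        rw [pow_succ, pow_mul]
        norm_num
        ring
      rw [h2, div_eq_mul_inv]
      ring
    · intro t ht htm
      have : t < m := by
        have := Finset.mem_range.mp ht
        omega
      rw [BubbleLiouville.ncoef_lt_top m t this]
      simp
end

section
/- Let m ≥ 1 be an integer, δ > 0 and ξ ∈ ℝ^{2m}. The function u(x) = log( 2δ / (δ² + |x−ξ|²) ) is smooth on ℝ^{2m} and satisfies (−Δ)^m u = (2m−1)! · e^{2m·u} at every point of ℝ^{2m}. (These are the standard, or geometric, solutions: (2m−1)! is the Q-curvature of the round 2m-sphere.) -/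
open MeasureTheory Real Filter
open scoped Topology

namespace StdSol


variable {n : ℕ} {ξ : EuclideanSpace ℝ (Fin n)} {δ : ℝ}

lemma g_hasFDerivAt (δ : ℝ) (ξ y : EuclideanSpace ℝ (Fin n)) :
    HasFDerivAt (fun z : EuclideanSpace ℝ (Fin n) => δ ^ 2 + ‖z - ξ‖ ^ 2)
      ((2:ℝ) • innerSL ℝ (y - ξ)) y := by
  have h := (((hasFDerivAt_id y).sub_const ξ).norm_sq).const_add (δ ^ 2)
  refine h.congr_fderiv ?_
  ext v
  simp [two_smul]

lemma sum_coord_sq (v : EuclideanSpace ℝ (Fin n)) : ∑ i : Fin n, (v i) ^ 2 = ‖v‖ ^ 2 := by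
  rw [EuclideanSpace.norm_eq, Real.sq_sqrt (by positivity)]
  simp [sq_abs]

lemma lap_comp (ψ ψ' ψ'' : ℝ → ℝ)
    (h1 : ∀ t, 0 < t → HasDerivAt ψ (ψ' t) t)
    (h2 : ∀ t, 0 < t → HasDerivAt ψ' (ψ'' t) t)
    (hδ : 0 < δ) (x : EuclideanSpace ℝ (Fin n)) :
    lap (fun y => ψ (δ ^ 2 + ‖y - ξ‖ ^ 2)) x
      = 4 * ‖x - ξ‖ ^ 2 * ψ'' (δ ^ 2 + ‖x - ξ‖ ^ 2)
        + 2 * n * ψ' (δ ^ 2 + ‖x - ξ‖ ^ 2) := by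
  set g : EuclideanSpace ℝ (Fin n) → ℝ := fun y => δ ^ 2 + ‖y - ξ‖ ^ 2 with hgdef
  have hgpos : ∀ y, 0 < g y := fun y => by positivity
  have hfd : ∀ y, HasFDerivAt (fun z => ψ (g z))
      (ψ' (g y) • ((2:ℝ) • innerSL ℝ (y - ξ))) y := fun y =>
    (h1 _ (hgpos y)).comp_hasFDerivAt y (g_hasFDerivAt δ ξ y)
  have key : ∀ i : Fin n,
      fderiv ℝ (fun y => fderiv ℝ (fun z => ψ (g z)) y (EuclideanSpace.single i 1)) x
          (EuclideanSpace.single i 1)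
        = 4 * ψ'' (g x) * ((x - ξ) i) ^ 2 + 2 * ψ' (g x) := by
    intro i
    have e1 : (fun y => fderiv ℝ (fun z => ψ (g z)) y (EuclideanSpace.single i 1))
        = fun y => ψ' (g y) * (2 * (y - ξ) i) := by
      funext y
      rw [(hfd y).fderiv]
      simp [real_inner_comm, EuclideanSpace.inner_single_right]
    rw [e1]
    have hA : HasFDerivAt (fun y => ψ' (g y))
        (ψ'' (g x) • ((2:ℝ) • innerSL ℝ (x - ξ))) x :=
      (h2 _ (hgpos x)).comp_hasFDerivAt x (g_hasFDerivAt δ ξ x)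
    have hB : HasFDerivAt (fun y : EuclideanSpace ℝ (Fin n) => 2 * (y - ξ) i)
        ((2:ℝ) • (EuclideanSpace.proj i : EuclideanSpace ℝ (Fin n) →L[ℝ] ℝ)) x := by
      have h := ((EuclideanSpace.proj (𝕜 := ℝ) i).hasFDerivAt (x := x)).sub_const (ξ i)
      have h2' := h.const_mul (2:ℝ)
      exact h2'
    rw [(hA.fun_mul hB).fderiv]
    simp [real_inner_comm, EuclideanSpace.inner_single_right]
    ring
  unfold lap
  rw [Finset.sum_congr rfl fun i _ => key i]
  rw [Finset.sum_add_distrib, Finset.sum_const]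
  simp only [Finset.card_univ, Fintype.card_fin, nsmul_eq_mul]
  rw [← Finset.mul_sum, sum_coord_sq]
  ring



/-- coefficient of `g^(k-2j)` in `(-Δ)^j u`, divided by `δ^(2(j-k))`. -/
def Dc (m j k : ℕ) : ℕ :=
  4 ^ j * Nat.factorial (2 * j - k - 1) * Nat.choose j k *
    Nat.descFactorial (m + k - 1 - j) k

lemma Dc_succ_self (m j : ℕ) : Dc m j (j + 1) = 0 := by
  simp [Dc, Nat.choose_eq_zero_of_lt (Nat.lt_succ_self j)]

lemma Dc_one_zero (m : ℕ) : Dc m 1 0 = 4 := by simp [Dc]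

lemma Dc_one_one (m : ℕ) (hm : 1 ≤ m) : Dc m 1 1 = 4 * (m - 1) := by
  have h1 : 2 * 1 - 1 - 1 = 0 := by omega
  have h2 : m + 1 - 1 - 1 = m - 1 := by omega
  simp [Dc, h1, h2]

lemma Dc_m_zero (m : ℕ) : Dc m m 0 = 4 ^ m * Nat.factorial (2 * m - 1) := by
  simp [Dc]

lemma Dc_m_pos (m k : ℕ) (hk : 1 ≤ k) : Dc m m k = 0 := by
  have h : m + k - 1 - m = k - 1 := by omega
  have h2 : Nat.descFactorial (k - 1) k = 0 :=
    Nat.descFactorial_eq_zero_iff_lt.2 (by omega)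
  simp [Dc, h, h2]

/-- first coefficient identity -/
lemma I1 (m j : ℕ) (hj : 1 ≤ j) :
    Dc m (j + 1) 0 = Dc m j 0 * (4 * (2 * j) * (2 * j + 1)) := by
  obtain ⟨j, rfl⟩ : ∃ j', j = j' + 1 := ⟨j - 1, by omega⟩
  have h1 : 2 * (j + 1 + 1) - 0 - 1 = (2 * j + 2) + 1 := by omega
  have h2 : 2 * (j + 1) - 0 - 1 = 2 * j + 1 := by omega
  simp only [Dc, h1, h2, Nat.choose_zero_right, Nat.descFactorial_zero,
    Nat.factorial_succ]
  ring

/-- top coefficient identity, `k = j` -/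
lemma I2top (m j : ℕ) (hj : 1 ≤ j) (hjm : j < m) :
    (Dc m (j + 1) (j + 1) : ℝ) = 4 * j * ((m : ℝ) - j - 1) * Dc m j j := by
  obtain ⟨c, rfl⟩ : ∃ c, m = j + 1 + c := ⟨m - j - 1, by omega⟩
  obtain ⟨j, rfl⟩ : ∃ j', j = j' + 1 := ⟨j - 1, by omega⟩
  have h1 : 2 * (j + 1 + 1) - (j + 1 + 1) - 1 = j + 1 := by omega
  have h2 : 2 * (j + 1) - (j + 1) - 1 = j := by omega
  have h3 : (j + 1 + 1) + (j + 1 + 1) - 1 - (j + 1 + 1) = j + 1 + 1 - 1 := by omega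
  have h4 : (j + 1 + 1 + c) + (j + 1) - 1 - (j + 1) = j + c + 1 := by omega
  have h5 : (j + 1 + 1 + c) + (j + 1 + 1) - 1 - (j + 1 + 1) = j + c + 1 := by omega
  simp only [Dc, h2, h4, h5, Nat.choose_self, h1]
  have hdf : Nat.descFactorial (j + c + 1) (j + 1 + 1)
      = c * Nat.descFactorial (j + c + 1) (j + 1) := by
    rw [Nat.descFactorial_succ]
    congr 1
    omega
  rw [hdf]
  have hfac : Nat.factorial (j + 1) = (j + 1) * Nat.factorial j := Nat.factorial_succ j
  push_cast [hfac]
  ring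

/-- main coefficient identity, `k < j` -/
lemma I2k (m j k : ℕ) (hk : k < j) (hjm : j < m) :
    (Dc m (j + 1) (k + 1) : ℝ)
      = (Dc m j k : ℝ) * (4 * (2 * (j:ℝ) - k) * ((m : ℝ) - (2 * (j:ℝ) - k) - 1))
        + (Dc m j (k + 1) : ℝ) * (4 * (2 * (j:ℝ) - k - 1) * (2 * (j:ℝ) - k)) := by
  obtain ⟨c, rfl⟩ : ∃ c, m = j + 1 + c := ⟨m - j - 1, by omega⟩
  obtain ⟨a, rfl⟩ : ∃ a, j = k + a + 1 := ⟨j - k - 1, by omega⟩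
  have h1 : 2 * (k + a + 1) - k - 1 = k + 2 * a + 1 := by omega
  have h2 : 2 * (k + a + 1) - (k + 1) - 1 = k + 2 * a := by omega
  have h3 : 2 * (k + a + 1 + 1) - (k + 1) - 1 = k + 2 * a + 2 := by omega
  have h4 : (k + a + 1 + 1 + c) + k - 1 - (k + a + 1) = k + c := by omega
  have h5 : (k + a + 1 + 1 + c) + (k + 1) - 1 - (k + a + 1) = k + c + 1 := by omega
  have h6 : (k + a + 1 + 1 + c) + (k + 1) - 1 - (k + a + 1 + 1) = k + c := by omega
  simp only [Dc, h1, h2, h3, h4, h5, h6]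
  have hch : Nat.choose (k + a + 1 + 1) (k + 1)
      = Nat.choose (k + a + 1) k + Nat.choose (k + a + 1) (k + 1) :=
    Nat.choose_succ_succ _ _
  have hdf1 : Nat.descFactorial (k + c) (k + 1) = c * Nat.descFactorial (k + c) k := by
    rw [Nat.descFactorial_succ]
    congr 1
    omega
  have hdf2 : Nat.descFactorial (k + c + 1) (k + 1)
      = (k + c + 1) * Nat.descFactorial (k + c) k := Nat.succ_descFactorial_succ _ _
  have hf1 : Nat.factorial (k + 2 * a + 1) = (k + 2 * a + 1) * Nat.factorial (k + 2 * a) :=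
    Nat.factorial_succ _
  have hf2 : Nat.factorial (k + 2 * a + 2) = (k + 2 * a + 2) * Nat.factorial (k + 2 * a + 1) :=
    Nat.factorial_succ _
  have hcr : (Nat.choose (k + a + 1) (k + 1) : ℝ) * (k + 1)
      = (Nat.choose (k + a + 1) k : ℝ) * (a + 1) := by
    have := Nat.choose_succ_right_eq (k + a + 1) k
    have h7 : k + a + 1 - k = a + 1 := by omega
    rw [h7] at this
    exact_mod_cast congrArg (Nat.cast (R := ℝ)) this
  rw [hch, hdf1, hdf2, hf2, hf1]
  push_cast
  linear_combination (-(4:ℝ) ^ (k + a + 1 + 1) * ((k:ℝ) + 2 * a + 2) * ((k:ℝ) + 2 * a + 1) *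
    (Nat.factorial (k + 2 * a) : ℝ) * (Nat.descFactorial (k + c) k : ℝ)) * hcr

noncomputable def Psi (m : ℕ) (δ : ℝ) (j : ℕ) : ℝ → ℝ := fun t =>
  ∑ k ∈ Finset.range (j + 1),
    (Dc m j k : ℝ) * δ ^ (2 * (j - k)) * t ^ ((k : ℤ) - 2 * j)

noncomputable def Psi' (m : ℕ) (δ : ℝ) (j : ℕ) : ℝ → ℝ := fun t =>
  ∑ k ∈ Finset.range (j + 1),
    (Dc m j k : ℝ) * δ ^ (2 * (j - k)) *
      (((k : ℝ) - 2 * j) * t ^ ((k : ℤ) - 2 * j - 1))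

noncomputable def Psi'' (m : ℕ) (δ : ℝ) (j : ℕ) : ℝ → ℝ := fun t =>
  ∑ k ∈ Finset.range (j + 1),
    (Dc m j k : ℝ) * δ ^ (2 * (j - k)) *
      (((k : ℝ) - 2 * j) * (((k : ℝ) - 2 * j - 1) * t ^ ((k : ℤ) - 2 * j - 2)))

lemma hasDerivAt_Psi (m : ℕ) (δ : ℝ) (j : ℕ) {t : ℝ} (ht : t ≠ 0) :
    HasDerivAt (Psi m δ j) (Psi' m δ j t) t := by
  apply HasDerivAt.fun_sum
  intro k _
  have h := (hasDerivAt_zpow ((k : ℤ) - 2 * j) t (Or.inl ht)).const_mul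
    ((Dc m j k : ℝ) * δ ^ (2 * (j - k)))
  refine h.congr_deriv ?_
  push_cast
  ring

lemma hasDerivAt_Psi' (m : ℕ) (δ : ℝ) (j : ℕ) {t : ℝ} (ht : t ≠ 0) :
    HasDerivAt (Psi' m δ j) (Psi'' m δ j t) t := by
  apply HasDerivAt.fun_sum
  intro k _
  have h := ((hasDerivAt_zpow ((k : ℤ) - 2 * j - 1) t (Or.inl ht)).const_mul
    ((k : ℝ) - 2 * j)).const_mul ((Dc m j k : ℝ) * δ ^ (2 * (j - k)))
  refine h.congr_deriv ?_
  push_cast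
  ring

lemma step (m : ℕ) {δ : ℝ} (hδ : 0 < δ) (j : ℕ) (hj : 1 ≤ j) (hjm : j < m)
    {t : ℝ} (ht : 0 < t) :
    -(4 * (t - δ ^ 2) * Psi'' m δ j t + 2 * (2 * (m : ℝ)) * Psi' m δ j t)
      = Psi m δ (j + 1) t := by
  have hne : t ≠ 0 := ht.ne'
  set A : ℕ → ℝ := fun k => (Dc m j k : ℝ) * δ ^ (2 * (j - k)) *
    (4 * (2 * (j : ℝ) - k) * ((m : ℝ) - (2 * (j : ℝ) - k) - 1)) with hA
  set B : ℕ → ℝ := fun k => (Dc m j k : ℝ) * δ ^ (2 * (j - k)) *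
    (4 * (2 * (j : ℝ) - k) * (2 * (j : ℝ) - k + 1)) * δ ^ 2 with hB
  have expand : -(4 * (t - δ ^ 2) * Psi'' m δ j t + 2 * (2 * (m : ℝ)) * Psi' m δ j t)
      = ∑ k ∈ Finset.range (j + 1),
          (A k * t ^ (((k : ℤ) + 1) - 2 * (j + 1)) + B k * t ^ ((k : ℤ) - 2 * (j + 1))) := by
    unfold Psi' Psi''
    rw [Finset.mul_sum, Finset.mul_sum, ← Finset.sum_add_distrib, ← Finset.sum_neg_distrib]
    apply Finset.sum_congr rfl
    intro k hk
    have e1 : ((k : ℤ) + 1) - 2 * ((j : ℤ) + 1) = ((k : ℤ) - 2 * j - 2) + 1 := by ring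
    have e2 : ((k : ℤ)) - 2 * ((j : ℤ) + 1) = (k : ℤ) - 2 * j - 2 := by ring
    have e3 : ((k : ℤ)) - 2 * (j : ℤ) - 1 = ((k : ℤ) - 2 * j - 2) + 1 := by ring
    push_cast
    rw [e1, e2, e3, zpow_add_one₀ hne]
    ring
  rw [expand, Finset.sum_add_distrib]
  -- second sum: shift the index
  rw [Finset.sum_range_succ' (fun k => B k * t ^ ((k : ℤ) - 2 * (j + 1))) j]
  have hBtop : B (j + 1) * t ^ (((j:ℤ) + 1) - 2 * (j + 1)) = 0 := by
    have : Dc m j (j + 1) = 0 := Dc_succ_self m j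
    simp [hB, this]
  have hext : ∑ k ∈ Finset.range j, B (k + 1) * t ^ (((k:ℤ) + 1) - 2 * (j + 1))
      = ∑ k ∈ Finset.range (j + 1), B (k + 1) * t ^ (((k:ℤ) + 1) - 2 * (j + 1)) := by
    rw [Finset.sum_range_succ, hBtop, add_zero]
  push_cast at hext ⊢
  rw [hext]
  -- RHS
  unfold Psi
  conv_rhs => rw [Finset.sum_range_succ']
  push_cast
  rw [← add_assoc, ← Finset.sum_add_distrib]
  congr 1
  · apply Finset.sum_congr rfl
    intro k hk
    have hkj : k ≤ j := by simpa using Nat.lt_succ_iff.mp (Finset.mem_range.mp hk)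
    have hδpow : δ ^ (2 * ((j + 1) - (k + 1))) = δ ^ (2 * (j - k)) := by
      congr 1; omega
    by_cases hklt : k < j
    · -- k < j
      have h2 := I2k m j k hklt hjm
      have hδpow2 : δ ^ (2 * (j - (k + 1))) * δ ^ 2 = δ ^ (2 * (j - k)) := by
        rw [← pow_add]; congr 1; try omega
      simp only [hA, hB, hδpow, h2]
      push_cast
      rw [← hδpow2]
      ring
    · -- k = j : top case
      have hkeq : k = j := le_antisymm hkj (le_of_not_gt hklt)
      subst hkeq
      have hBz : B (k + 1) = 0 := by simp [hB, Dc_succ_self m k]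
      have h2 := I2top m k hj hjm
      have hjj : 2 * (k - k) = 0 := by omega
      rw [hBz]
      simp only [hA, hδpow, hjj, pow_zero, h2]
      push_cast
      ring
  · -- constant (k = 0) term
    have h1 := I1 m j hj
    simp only [hB, h1]
    have hδpow : δ ^ (2 * (j - 0)) * δ ^ 2 = δ ^ (2 * (j + 1)) := by
      rw [← pow_add]; congr 1; try omega
    push_cast
    rw [← hδpow]
    ring


lemma base (m : ℕ) (hm : 1 ≤ m) {δ : ℝ} (hδ : 0 < δ) {t : ℝ} (ht : 0 < t) :
    -(4 * (t - δ ^ 2) * (t ^ 2)⁻¹ + 2 * (2 * (m : ℝ)) * (-t⁻¹)) = Psi m δ 1 t := by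
  have hne : t ≠ 0 := ht.ne'
  unfold Psi
  rw [Finset.sum_range_succ, Finset.sum_range_succ, Finset.sum_range_zero,
    Dc_one_zero, Dc_one_one m hm]
  push_cast [Nat.cast_sub hm]
  have e2 : t ^ (-2 : ℤ) = (t ^ 2)⁻¹ := by
    rw [show (-2 : ℤ) = -(2 : ℤ) from rfl, zpow_neg, zpow_two, sq]
  have e1 : t ^ (-1 : ℤ) = t⁻¹ := by
    rw [show (-1 : ℤ) = -(1 : ℤ) from rfl, zpow_neg, zpow_one]
  rw [e2, e1]
  field_simp
  ring

lemma log_hasDerivAt {δ : ℝ} (hδ : 0 < δ) {t : ℝ} (ht : 0 < t) :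
    HasDerivAt (fun s : ℝ => Real.log (2 * δ / s)) (-t⁻¹) t := by
  have h := (Real.hasDerivAt_log ht.ne').const_sub (Real.log (2 * δ))
  apply h.congr_of_eventuallyEq
  filter_upwards [eventually_gt_nhds ht] with s hs
  rw [Real.log_div (by positivity) hs.ne']

lemma neg_inv_hasDerivAt {t : ℝ} (ht : 0 < t) :
    HasDerivAt (fun s : ℝ => -s⁻¹) ((t ^ 2)⁻¹) t := by
  simpa using (hasDerivAt_inv ht.ne').fun_neg

end StdSol

open StdSol in
/-- The geometric standard solutions: `u(x) = log(2δ/(δ² + |x−ξ|²))` is smooth and solves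
`(−Δ)^m u = (2m−1)! e^{2mu}` on all of `ℝ^{2m}`. -/
theorem standard_solution_solves (m : ℕ) (hm : 1 ≤ m) (δ : ℝ) (hδ : 0 < δ)
    (ξ : EuclideanSpace ℝ (Fin (2 * m))) :
    ContDiff ℝ (⊤ : ℕ∞) (fun x : EuclideanSpace ℝ (Fin (2 * m)) =>
        Real.log (2 * δ / (δ ^ 2 + ‖x - ξ‖ ^ 2))) ∧
      ∀ x, negLapPow m (fun x : EuclideanSpace ℝ (Fin (2 * m)) =>
          Real.log (2 * δ / (δ ^ 2 + ‖x - ξ‖ ^ 2))) x =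
        Nat.factorial (2 * m - 1) *
          Real.exp (2 * m * Real.log (2 * δ / (δ ^ 2 + ‖x - ξ‖ ^ 2))) := by
  set u : EuclideanSpace ℝ (Fin (2 * m)) → ℝ :=
    fun x => Real.log (2 * δ / (δ ^ 2 + ‖x - ξ‖ ^ 2)) with hu
  constructor
  · have hg : ContDiff ℝ (⊤ : ℕ∞) (fun x : EuclideanSpace ℝ (Fin (2 * m)) => δ ^ 2 + ‖x - ξ‖ ^ 2) :=
      contDiff_const.add (ContDiff.norm_sq (𝕜 := ℝ) (contDiff_id.sub contDiff_const))
    exact ContDiff.log (contDiff_const.div hg (fun x => by positivity))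
      (fun x => by positivity)
  · have hiter : ∀ j, 1 ≤ j → j ≤ m →
        negLapPow j u = fun x => Psi m δ j (δ ^ 2 + ‖x - ξ‖ ^ 2) := by
      intro j hj1
      induction j, hj1 using Nat.le_induction with
      | base =>
        intro _
        funext x
        have h1 : negLapPow 1 u x = -lap u x := by
          simp [negLapPow]
        rw [h1]
        have hcomp := lap_comp (n := 2 * m) (ξ := ξ)
          (fun s : ℝ => Real.log (2 * δ / s)) (fun s => -s⁻¹) (fun s => (s ^ 2)⁻¹)
          (fun t ht => log_hasDerivAt hδ ht) (fun t ht => neg_inv_hasDerivAt ht) hδ x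
        rw [hu]
        rw [hcomp]
        set t : ℝ := δ ^ 2 + ‖x - ξ‖ ^ 2 with hts
        have ht : 0 < t := by rw [hts]; positivity
        have hr : ‖x - ξ‖ ^ 2 = t - δ ^ 2 := by rw [hts]; ring
        rw [hr]
        have := base m hm hδ ht
        push_cast
        linarith [this]
      | succ j hj ih =>
        intro hj1m
        have hjm : j < m := hj1m
        funext x
        have h1 : negLapPow (j + 1) u x = -lap (negLapPow j u) x := by
          simp [negLapPow, Function.iterate_succ_apply']
        rw [h1, ih (le_of_lt hjm)]
        have hcomp := lap_comp (n := 2 * m) (ξ := ξ)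
          (Psi m δ j) (Psi' m δ j) (Psi'' m δ j)
          (fun t ht => hasDerivAt_Psi m δ j ht.ne') (fun t ht => hasDerivAt_Psi' m δ j ht.ne')
          hδ x
        rw [hcomp]
        set t : ℝ := δ ^ 2 + ‖x - ξ‖ ^ 2 with hts
        have ht : 0 < t := by rw [hts]; positivity
        have hr : ‖x - ξ‖ ^ 2 = t - δ ^ 2 := by rw [hts]; ring
        rw [hr]
        have := step m hδ j hj hjm ht
        push_cast
        linarith [this]
    intro x
    rw [hiter m hm le_rfl]
    show Psi m δ m (δ ^ 2 + ‖x - ξ‖ ^ 2) = _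
    set t : ℝ := δ ^ 2 + ‖x - ξ‖ ^ 2 with hts
    have ht : 0 < t := by rw [hts]; positivity
    have hne : t ≠ 0 := ht.ne'
    -- evaluate Psi m δ m t
    have hPsi : Psi m δ m t = (4 ^ m * Nat.factorial (2 * m - 1) : ℝ) * δ ^ (2 * m) *
        (t ^ (2 * m))⁻¹ := by
      unfold Psi
      rw [Finset.sum_eq_single 0]
      · have hz : ((0 : ℕ) : ℤ) - 2 * (m : ℤ) = -((2 * m : ℕ) : ℤ) := by push_cast; ring
        rw [Dc_m_zero, hz, zpow_neg, zpow_natCast]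
        simp only [Nat.sub_zero]
        push_cast
        ring
      · intro k _ hk0
        rw [Dc_m_pos m k (Nat.one_le_iff_ne_zero.mpr hk0)]
        simp
      · intro h
        exact absurd (Finset.mem_range.mpr (by omega)) h
    rw [hPsi]
    -- evaluate the exponential
    have hy : (0 : ℝ) < 2 * δ / t := by positivity
    have hlog : 2 * (m : ℝ) * Real.log (2 * δ / t) = Real.log ((2 * δ / t) ^ (2 * m)) := by
      rw [Real.log_pow]; push_cast; ring
    rw [hlog, Real.exp_log (by positivity)]
    rw [div_pow, mul_pow]
    have h4 : (2 : ℝ) ^ (2 * m) = 4 ^ m := by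
      rw [pow_mul]; norm_num
    rw [h4]
    field_simp
end

section
/- Let m ≥ 1 be an integer and μ > 0. The function Y₀(z) = (|z|² − μ²)/(μ² + |z|²) is smooth on ℝ^{2m} and satisfies the linearized Liouville equation (−Δ)^m Y₀ = 2^{2m+1} · m · (2m−1)! · μ^{2m} · (μ² + |z|²)^{−2m} · Y₀ at every point of ℝ^{2m}. -/
open MeasureTheory Real Filter
open scoped Topology

open Finset

noncomputable section KernelAux

lemma sum_coord_sq {n : ℕ} (z : EuclideanSpace ℝ (Fin n)) : ∑ i, (z i)^2 = ‖z‖^2 := by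
  rw [EuclideanSpace.norm_eq, Real.sq_sqrt (by positivity)]
  simp [Real.norm_eq_abs, sq_abs]

lemma lap_radial {n : ℕ} (φ φ' φ'' : ℝ → ℝ)
    (hφ : ∀ s : ℝ, 0 ≤ s → HasDerivAt φ (φ' s) s)
    (hφ' : ∀ s : ℝ, 0 ≤ s → HasDerivAt φ' (φ'' s) s)
    (z : EuclideanSpace ℝ (Fin n)) :
    lap (fun y : EuclideanSpace ℝ (Fin n) => φ (‖y‖ ^ 2)) z
      = 4 * ‖z‖ ^ 2 * φ'' (‖z‖ ^ 2) + 2 * n * φ' (‖z‖ ^ 2) := by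
  have key : ∀ (ψ ψ' : ℝ → ℝ), (∀ s : ℝ, 0 ≤ s → HasDerivAt ψ (ψ' s) s) →
      ∀ y : EuclideanSpace ℝ (Fin n),
      HasFDerivAt (fun y : EuclideanSpace ℝ (Fin n) => ψ (‖y‖^2))
        (ψ' (‖y‖^2) • ((2:ℕ) • innerSL ℝ y)) y := by
    intro ψ ψ' h y
    exact (h _ (by positivity)).comp_hasFDerivAt y (hasStrictFDerivAt_norm_sq y).hasFDerivAt
  have hfun : ∀ i : Fin n,
      (fun y : EuclideanSpace ℝ (Fin n) =>
          fderiv ℝ (fun y : EuclideanSpace ℝ (Fin n) => φ (‖y‖^2)) y (EuclideanSpace.single i 1))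
      = fun y : EuclideanSpace ℝ (Fin n) => φ' (‖y‖^2) * (2 * y i) := by
    intro i; funext y
    rw [(key φ φ' hφ y).fderiv]
    have : (innerSL ℝ y) (EuclideanSpace.single i (1:ℝ)) = y i := by
      simp [EuclideanSpace.inner_single_right]
    simp [this, smul_smul]
  have hterm : ∀ i : Fin n,
      fderiv ℝ (fun y : EuclideanSpace ℝ (Fin n) =>
          fderiv ℝ (fun y : EuclideanSpace ℝ (Fin n) => φ (‖y‖^2)) y (EuclideanSpace.single i 1))
        z (EuclideanSpace.single i 1)
      = 4 * (z i)^2 * φ'' (‖z‖^2) + 2 * φ' (‖z‖^2) := by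
    intro i
    rw [hfun i]
    have h1 : HasFDerivAt (fun y : EuclideanSpace ℝ (Fin n) => φ' (‖y‖^2))
        (φ'' (‖z‖^2) • ((2:ℕ) • innerSL ℝ z)) z := key φ' φ'' hφ' z
    have h2 : HasFDerivAt (fun y : EuclideanSpace ℝ (Fin n) => 2 * y i)
        ((2:ℝ) • (innerSL ℝ (EuclideanSpace.single i (1:ℝ)))) z := by
      have h := ((innerSL ℝ (EuclideanSpace.single i (1:ℝ))).hasFDerivAt (x := z)).const_mul (2:ℝ)
      have e : (fun y : EuclideanSpace ℝ (Fin n) =>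
          2 * (innerSL ℝ (EuclideanSpace.single i (1:ℝ))) y) =
          (fun y : EuclideanSpace ℝ (Fin n) => 2 * y i) := by
        funext y
        simp [EuclideanSpace.inner_single_left]
      rwa [e] at h
    have h3 : HasFDerivAt (fun y : EuclideanSpace ℝ (Fin n) => φ' (‖y‖^2) * (2 * y i)) _ z :=
      h1.mul h2
    rw [h3.fderiv]
    have e1 : (innerSL ℝ (EuclideanSpace.single i (1:ℝ))) (EuclideanSpace.single i (1:ℝ)) = 1 := by
      simp [EuclideanSpace.inner_single_left]
    have e2 : (innerSL ℝ z) (EuclideanSpace.single i (1:ℝ)) = z i := by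
      simp [EuclideanSpace.inner_single_right]
    simp [e1, e2, smul_smul]
    ring
  unfold lap
  rw [Finset.sum_congr rfl (fun i _ => hterm i)]
  rw [Finset.sum_add_distrib, Finset.sum_const, Finset.card_univ, Fintype.card_fin]
  have e : ∑ i : Fin n, 4 * (z i)^2 * φ'' (‖z‖^2) = 4 * ‖z‖^2 * φ'' (‖z‖^2) := by
    rw [← sum_coord_sq z, Finset.mul_sum, Finset.sum_mul]
  rw [e, nsmul_eq_mul]
  ring

lemma hasDerivAt_tpow (μ : ℝ) (hμ : 0 < μ) (k : ℕ) (s : ℝ) (hs : 0 ≤ s) :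
    HasDerivAt (fun s : ℝ => (μ^2/(μ^2+s))^k)
      (-(k:ℝ)/μ^2 * (μ^2/(μ^2+s))^(k+1)) s := by
  have hne : μ^2 + s ≠ 0 := by positivity
  have h0 : HasDerivAt (fun s : ℝ => μ^2 + s) 1 s := by
    simpa using (hasDerivAt_id s).const_add (μ^2)
  have h1 : HasDerivAt (fun s : ℝ => μ^2/(μ^2+s)) (-(μ^2)/(μ^2+s)^2) s := by
    have := ((hasDerivAt_const s (μ^2)).div h0 hne)
    simpa [Pi.div_def] using this
  have h2 : HasDerivAt (fun s : ℝ => (μ^2/(μ^2+s))^k) _ s := h1.pow k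
  convert h2 using 1
  rcases k with _ | k
  · simp
  · have : (μ ^ 2 / (μ ^ 2 + s)) ^ (k + 1 + 1) = (μ ^ 2 / (μ ^ 2 + s)) ^ k * (μ ^ 2 / (μ ^ 2 + s))^2 := by ring
    rw [this]
    have hk : k + 1 - 1 = k := rfl
    rw [hk]
    field_simp

lemma neg_lap_tsum (m : ℕ) (μ : ℝ) (hμ : 0 < μ) (N : ℕ) (c : ℕ → ℝ) (k : ℕ → ℕ)
    (z : EuclideanSpace ℝ (Fin (2*m))) :
    -lap (fun y : EuclideanSpace ℝ (Fin (2*m)) =>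
        ∑ i ∈ Finset.range N, c i * (μ^2/(μ^2+‖y‖^2))^(k i)) z
      = ∑ i ∈ Finset.range N, c i / μ^2 *
          (4 * (k i) * ((m:ℝ) - (k i) - 1) * (μ^2/(μ^2+‖z‖^2))^(k i + 1)
            + 4 * (k i) * ((k i : ℝ) + 1) * (μ^2/(μ^2+‖z‖^2))^(k i + 2)) := by
  set φ : ℝ → ℝ := fun s => ∑ i ∈ Finset.range N, c i * (μ^2/(μ^2+s))^(k i) with hφdef
  set φ' : ℝ → ℝ := fun s => ∑ i ∈ Finset.range N,
    c i * (-(k i : ℝ)/μ^2 * (μ^2/(μ^2+s))^(k i + 1)) with hφ'def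
  set φ'' : ℝ → ℝ := fun s => ∑ i ∈ Finset.range N,
    c i * ((k i : ℝ) * ((k i : ℝ)+1)/μ^4 * (μ^2/(μ^2+s))^(k i + 2)) with hφ''def
  have hφ : ∀ s : ℝ, 0 ≤ s → HasDerivAt φ (φ' s) s := by
    intro s hs
    exact HasDerivAt.fun_sum (fun i _ => (hasDerivAt_tpow μ hμ (k i) s hs).const_mul (c i))
  have hφ' : ∀ s : ℝ, 0 ≤ s → HasDerivAt φ' (φ'' s) s := by
    intro s hs
    have h := HasDerivAt.fun_sum (u := Finset.range N)
      (A := fun i s => c i * (-(k i : ℝ)/μ^2 * (μ^2/(μ^2+s))^(k i + 1)))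
      (A' := fun i => c i * (-(k i : ℝ)/μ^2 * (-((k i : ℝ)+1)/μ^2 * (μ^2/(μ^2+s))^(k i + 2))))
      (fun i _ => by
        have := ((hasDerivAt_tpow μ hμ (k i + 1) s hs).const_mul (-(k i : ℝ)/μ^2)).const_mul (c i)
        refine this.congr_deriv ?_
        push_cast
        ring)
    have e : φ'' s = ∑ i ∈ Finset.range N,
        c i * (-(k i : ℝ)/μ^2 * (-((k i : ℝ)+1)/μ^2 * (μ^2/(μ^2+s))^(k i + 2))) := by
      apply Finset.sum_congr rfl
      intro i _
      field_simp
    rw [hφ'def]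
    rw [show (fun s => ∑ i ∈ Finset.range N, c i * (-(k i : ℝ)/μ^2 * (μ^2/(μ^2+s))^(k i + 1))) = φ' from rfl]
    rw [e]
    exact h
  have key := lap_radial φ φ' φ'' hφ hφ' z
  have : lap (fun y : EuclideanSpace ℝ (Fin (2*m)) =>
      ∑ i ∈ Finset.range N, c i * (μ^2/(μ^2+‖y‖^2))^(k i)) z
      = 4 * ‖z‖ ^ 2 * φ'' (‖z‖ ^ 2) + 2 * ((2*m : ℕ) : ℝ) * φ' (‖z‖ ^ 2) := key
  rw [this]
  rw [hφ'def, hφ''def]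
  simp only [Finset.mul_sum, ← Finset.sum_add_distrib, ← Finset.sum_neg_distrib]
  apply Finset.sum_congr rfl
  intro i _
  have hne : μ^2 + ‖z‖^2 ≠ 0 := by positivity
  have hp2 : (μ^2/(μ^2+‖z‖^2))^(k i + 1) = (μ^2/(μ^2+‖z‖^2))^(k i) * (μ^2/(μ^2+‖z‖^2)) := by ring
  have hp3 : (μ^2/(μ^2+‖z‖^2))^(k i + 2) = (μ^2/(μ^2+‖z‖^2))^(k i) * (μ^2/(μ^2+‖z‖^2))^2 := by ring
  rw [hp2, hp3]
  push_cast
  field_simp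
  ring

def dco (j i : ℕ) : ℝ :=
  (Nat.factorial (j+i) : ℝ) / ((Nat.factorial (j-i) : ℝ) * (Nat.factorial i : ℝ))

def Pco (m j i : ℕ) : ℝ := ∏ l ∈ Finset.Ico i j, ((m:ℝ) - 2 - (l:ℝ))

def Cco (m : ℕ) (μ : ℝ) (j i : ℕ) : ℝ :=
  (-2) * 4^j * (Nat.factorial j : ℝ) * dco j i * Pco m j i / μ^(2*j)

lemma fact_ne (n : ℕ) : ((Nat.factorial n : ℝ)) ≠ 0 := by
  exact_mod_cast (Nat.factorial_pos n).ne'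

lemma dco_zero (j : ℕ) : dco j 0 = 1 := by
  simp [dco]
  exact Nat.factorial_ne_zero j

lemma Pco_succ_top {m j i : ℕ} (h : i ≤ j) :
    Pco m (j+1) i = Pco m j i * ((m:ℝ) - 2 - (j:ℝ)) :=
  Finset.prod_Ico_succ_top h _

lemma Pco_bot {m j i : ℕ} (h : i < j) :
    Pco m j i = ((m:ℝ) - 2 - (i:ℝ)) * Pco m j (i+1) :=
  Finset.prod_eq_prod_Ico_succ_bot h _

lemma Pco_self (m j : ℕ) : Pco m j j = 1 := by simp [Pco]

lemma d_identity (j i : ℕ) (hij : i < j) (m : ℝ) :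
    dco j (i+1) * ((j:ℝ)+2+i) * (m-(j:ℝ)-3-(i:ℝ))
      + dco j i * (m-2-(i:ℝ)) * ((j:ℝ)+1+i) * ((j:ℝ)+2+i)
    = ((j:ℝ)+1) * dco (j+1) (i+1) * (m-2-(j:ℝ)) := by
  obtain ⟨a, rfl⟩ := Nat.exists_eq_add_of_lt hij
  simp only [dco]
  rw [show i + a + 1 - (i+1) = a by omega,
      show i + a + 1 - i = a + 1 by omega,
      show i + a + 1 + 1 - (i+1) = a + 1 by omega,
      show i + a + 1 + (i+1) = (i + a + 1 + i) + 1 by omega,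
      show i + a + 1 + 1 + (i+1) = (i + a + 1 + i) + 1 + 1 by omega,
      Nat.factorial_succ ((i + a + 1 + i) + 1), Nat.factorial_succ (i + a + 1 + i),
      Nat.factorial_succ a, Nat.factorial_succ i]
  push_cast
  field_simp
  ring

lemma id_a (m j : ℕ) (μ : ℝ) (hμ : 0 < μ) :
    Cco m μ j 0 / μ^2 * (4 * ((j+1:ℕ):ℝ) * ((m:ℝ) - ((j+1:ℕ):ℝ) - 1))
      = Cco m μ (j+1) 0 := by
  simp only [Cco, dco_zero, Pco_succ_top (Nat.zero_le j)]
  rw [show 2*(j+1) = 2*j+1+1 by omega, pow_succ, pow_succ, Nat.factorial_succ, pow_succ]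
  push_cast
  field_simp
  ring

lemma id_b (m j : ℕ) (μ : ℝ) (hμ : 0 < μ) :
    Cco m μ j j / μ^2 * (4 * ((j+1+j:ℕ):ℝ) * (((j+1+j:ℕ):ℝ) + 1))
      = Cco m μ (j+1) (j+1) := by
  simp only [Cco, Pco_self]
  simp only [dco, show j - j = 0 by omega, show j+1-(j+1) = 0 by omega,
    show j + 1 + (j+1) = (j + j) + 1 + 1 by omega,
    show j + 1 + j = (j + j) + 1 by omega,
    Nat.factorial_succ ((j+j)+1), Nat.factorial_succ (j+j), Nat.factorial_succ j,
    Nat.factorial_zero]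
  rw [show 2*(j+1) = 2*j+1+1 by omega, pow_succ, pow_succ, pow_succ]
  push_cast
  field_simp
  ring

lemma id_c (m j i : ℕ) (hij : i < j) (μ : ℝ) (hμ : 0 < μ) :
    Cco m μ j (i+1) / μ^2 * (4 * ((j+1+(i+1):ℕ):ℝ) * ((m:ℝ) - ((j+1+(i+1):ℕ):ℝ) - 1))
      + Cco m μ j i / μ^2 * (4 * ((j+1+i:ℕ):ℝ) * (((j+1+i:ℕ):ℝ) + 1))
      = Cco m μ (j+1) (i+1) := by
  have hd := d_identity j i hij (m : ℝ)
  simp only [Cco, Pco_bot hij, Pco_succ_top (by omega : i + 1 ≤ j)]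
  rw [show 2*(j+1) = 2*j+1+1 by omega, pow_succ, pow_succ, Nat.factorial_succ, pow_succ]
  push_cast
  linear_combination ((-2) * 4^j * (Nat.factorial j : ℝ) * Pco m j (i+1) * 4 / (μ^(2*j) * μ^2)) * hd

lemma step_alg (m j : ℕ) (μ : ℝ) (hμ : 0 < μ) (x : ℝ) :
    ∑ i ∈ Finset.range (j+1), Cco m μ j i / μ^2 *
        (4 * ((j+1+i:ℕ):ℝ) * ((m:ℝ) - ((j+1+i:ℕ):ℝ) - 1) * x^((j+1+i) + 1)
          + 4 * ((j+1+i:ℕ):ℝ) * (((j+1+i:ℕ):ℝ) + 1) * x^((j+1+i) + 2))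
      = ∑ i ∈ Finset.range (j+1+1), Cco m μ (j+1) i * x^(j+1+1+i) := by
  have split : ∀ i, Cco m μ j i / μ^2 *
        (4 * ((j+1+i:ℕ):ℝ) * ((m:ℝ) - ((j+1+i:ℕ):ℝ) - 1) * x^((j+1+i) + 1)
          + 4 * ((j+1+i:ℕ):ℝ) * (((j+1+i:ℕ):ℝ) + 1) * x^((j+1+i) + 2))
      = (Cco m μ j i / μ^2 * (4 * ((j+1+i:ℕ):ℝ) * ((m:ℝ) - ((j+1+i:ℕ):ℝ) - 1))) * x^(j+1+i+1)
        + (Cco m μ j i / μ^2 * (4 * ((j+1+i:ℕ):ℝ) * (((j+1+i:ℕ):ℝ) + 1))) * x^(j+1+i+2) := by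
    intro i; ring
  rw [Finset.sum_congr rfl (fun i _ => split i), Finset.sum_add_distrib]
  set A : ℕ → ℝ := fun i => (Cco m μ j i / μ^2 * (4 * ((j+1+i:ℕ):ℝ) * ((m:ℝ) - ((j+1+i:ℕ):ℝ) - 1))) * x^(j+1+i+1) with hA
  set B : ℕ → ℝ := fun i => (Cco m μ j i / μ^2 * (4 * ((j+1+i:ℕ):ℝ) * (((j+1+i:ℕ):ℝ) + 1))) * x^(j+1+i+2) with hB
  set C : ℕ → ℝ := fun i => Cco m μ (j+1) i * x^(j+1+1+i) with hC
  have hSA : ∑ i ∈ Finset.range (j+1), A i = A 0 + ∑ i ∈ Finset.range j, A (i+1) := by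
    rw [Finset.sum_range_succ' A j]; ring
  have hSB : ∑ i ∈ Finset.range (j+1), B i = (∑ i ∈ Finset.range j, B i) + B j :=
    Finset.sum_range_succ B j
  have hSC : ∑ i ∈ Finset.range (j+2), C i
      = C 0 + ((∑ i ∈ Finset.range j, C (i+1)) + C (j+1)) := by
    rw [Finset.sum_range_succ' C (j+1), Finset.sum_range_succ (fun i => C (i+1)) j]
    ring
  have hA0 : A 0 = C 0 := by
    simp only [hA, hC]
    rw [id_a m j μ hμ]
  have hBj : B j = C (j+1) := by
    simp only [hA, hB, hC]
    rw [id_b m j μ hμ]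
    congr 2
    omega
  have hmid : ∀ i ∈ Finset.range j, A (i+1) + B i = C (i+1) := by
    intro i hi
    simp only [Finset.mem_range] at hi
    simp only [hA, hB, hC]
    rw [show j+1+(i+1)+1 = j+1+i+2 by omega, show j+1+1+(i+1) = j+1+i+2 by omega,
      ← add_mul]
    rw [id_c m j i hi μ hμ]
  rw [hSA, hSB, hSC]
  have : ∑ i ∈ Finset.range j, A (i+1) + ∑ i ∈ Finset.range j, B i
      = ∑ i ∈ Finset.range j, C (i+1) := by
    rw [← Finset.sum_add_distrib]
    exact Finset.sum_congr rfl hmid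
  rw [hA0, hBj]
  linarith [this]


lemma negLapPow_succ {n : ℕ} (j : ℕ) (f : EuclideanSpace ℝ (Fin n) → ℝ) :
    negLapPow (j+1) f = fun x => -lap (negLapPow j f) x := by
  simp only [negLapPow, Function.iterate_succ_apply']

lemma main_ind (m : ℕ) (μ : ℝ) (hμ : 0 < μ) :
    ∀ j, 1 ≤ j →
    negLapPow j (fun z : EuclideanSpace ℝ (Fin (2*m)) => (‖z‖^2 - μ^2)/(μ^2+‖z‖^2))
      = fun z => ∑ i ∈ Finset.range (j+1), Cco m μ j i * (μ^2/(μ^2+‖z‖^2))^(j+1+i) := by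
  intro j hj
  induction j, hj using Nat.le_induction with
  | base =>
    have hY : (fun z : EuclideanSpace ℝ (Fin (2*m)) => (‖z‖^2 - μ^2)/(μ^2+‖z‖^2))
        = (fun y : EuclideanSpace ℝ (Fin (2*m)) =>
            ∑ i ∈ Finset.range 2, (if i = 0 then (1:ℝ) else -2) * (μ^2/(μ^2+‖y‖^2))^((fun i => i) i)) := by
      funext y
      have h : μ^2 + ‖y‖^2 ≠ 0 := by positivity
      simp [Finset.sum_range_succ]
      field_simp
      ring
    have h1 : negLapPow 1 (fun z : EuclideanSpace ℝ (Fin (2*m)) => (‖z‖^2 - μ^2)/(μ^2+‖z‖^2))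
        = fun x => -lap (fun z : EuclideanSpace ℝ (Fin (2*m)) => (‖z‖^2 - μ^2)/(μ^2+‖z‖^2)) x := by
      simp only [negLapPow, Function.iterate_one]
    rw [h1]
    funext z
    rw [hY, neg_lap_tsum m μ hμ 2 (fun i => if i = 0 then (1:ℝ) else -2) (fun i => i) z]
    have hP10 : Pco m 1 0 = (m:ℝ) - 2 := by
      simp [Pco]
    have hP11 : Pco m 1 1 = 1 := by simp [Pco]
    simp [Finset.sum_range_succ, Cco, dco, hP10, hP11, Nat.factorial]
    field_simp
    ring
  | succ j hj ih =>
    funext z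
    rw [negLapPow_succ, ih]
    dsimp only
    rw [neg_lap_tsum m μ hμ (j+1) (Cco m μ j) (fun i => j+1+i) z]
    have := step_alg m j μ hμ (μ^2/(μ^2+‖z‖^2))
    push_cast at this ⊢
    convert this using 2

/-- main theorem -/
theorem kernel_element_radial (m : ℕ) (hm : 1 ≤ m) (μ : ℝ) (hμ : 0 < μ) :
    ContDiff ℝ (⊤ : ℕ∞) (fun z : EuclideanSpace ℝ (Fin (2 * m)) =>
        (‖z‖ ^ 2 - μ ^ 2) / (μ ^ 2 + ‖z‖ ^ 2)) ∧
      ∀ z, negLapPow m (fun z : EuclideanSpace ℝ (Fin (2 * m)) =>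
          (‖z‖ ^ 2 - μ ^ 2) / (μ ^ 2 + ‖z‖ ^ 2)) z =
        2 ^ (2 * m + 1) * m * Nat.factorial (2 * m - 1) * μ ^ (2 * m) *
          ((μ ^ 2 + ‖z‖ ^ 2) ^ (2 * m))⁻¹ * ((‖z‖ ^ 2 - μ ^ 2) / (μ ^ 2 + ‖z‖ ^ 2)) := by
  constructor
  · have h1 : ContDiff ℝ (⊤ : ℕ∞) (fun z : EuclideanSpace ℝ (Fin (2*m)) => ‖z‖^2 - μ^2) :=
      (contDiff_norm_sq ℝ).sub contDiff_const
    have h2 : ContDiff ℝ (⊤ : ℕ∞) (fun z : EuclideanSpace ℝ (Fin (2*m)) => μ^2 + ‖z‖^2) :=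
      contDiff_const.add (contDiff_norm_sq ℝ)
    exact h1.div h2 (fun z => by positivity)
  · intro z
    obtain ⟨m', rfl⟩ : ∃ m', m = m' + 1 := ⟨m - 1, by omega⟩
    rw [main_ind (m'+1) μ hμ (m'+1) (by omega)]
    dsimp only
    rw [Finset.sum_range_succ, Finset.sum_range_succ]
    have hzero : ∑ i ∈ Finset.range m', Cco (m'+1) μ (m'+1) i
        * (μ^2/(μ^2+‖z‖^2))^(m'+1+1+i) = 0 := by
      apply Finset.sum_eq_zero
      intro i hi
      simp only [Finset.mem_range] at hi
      have hP : Pco (m'+1) (m'+1) i = 0 := by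
        apply Finset.prod_eq_zero (i := m' - 1)
        · simp only [Finset.mem_Ico]; omega
        · have h1 : ((m' - 1 : ℕ) : ℝ) = (m' : ℝ) - 1 := by
            rw [Nat.cast_sub (by omega : 1 ≤ m')]; norm_num
          push_cast [h1]
          ring
      simp [Cco, hP]
    rw [hzero]
    -- now explicit values
    have hs : μ^2 + ‖z‖^2 ≠ 0 := by positivity
    have hμ0 : μ ≠ 0 := ne_of_gt hμ
    have hdm : dco (m'+1) m' = ((Nat.factorial (2*m'+1) : ℝ)) / (Nat.factorial m' : ℝ) := by
      simp only [dco, show m'+1+m' = 2*m'+1 by omega, show m'+1-m' = 1 by omega,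
        Nat.factorial_one]
      norm_num
    have hdm1 : dco (m'+1) (m'+1) = ((Nat.factorial (2*m'+2) : ℝ)) / (Nat.factorial (m'+1) : ℝ) := by
      simp only [dco, show m'+1+(m'+1) = 2*m'+2 by omega, show m'+1-(m'+1) = 0 by omega,
        Nat.factorial_zero]
      norm_num
    have hPm : Pco (m'+1) (m'+1) m' = -1 := by
      simp only [Pco]
      rw [show Finset.Ico m' (m'+1) = {m'} from Nat.Ico_succ_singleton m', Finset.prod_singleton]
      push_cast
      ring
    have hPm1 : Pco (m'+1) (m'+1) (m'+1) = 1 := by simp [Pco]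
    have hfact : (Nat.factorial (2*m'+2) : ℝ) = (2*(m':ℝ)+2) * (Nat.factorial (2*m'+1) : ℝ) := by
      rw [show 2*m'+2 = (2*m'+1)+1 by omega, Nat.factorial_succ]
      push_cast; ring
    have hfactm : (Nat.factorial (m'+1) : ℝ) = ((m':ℝ)+1) * (Nat.factorial m' : ℝ) := by
      rw [Nat.factorial_succ]; push_cast; ring
    have htarget : (2*(m'+1) - 1) = 2*m'+1 := by omega
    simp only [Cco, hdm, hdm1, hPm, hPm1, hfact, hfactm, htarget]
    have h4 : (4:ℝ)^(m'+1) = 2^(2*(m'+1)) := by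
      rw [show (4:ℝ) = 2^2 by norm_num, ← pow_mul]
    have hfne : (Nat.factorial m' : ℝ) ≠ 0 := by
      exact_mod_cast (Nat.factorial_pos m').ne'
    have hfne2 : (Nat.factorial (2*m'+1) : ℝ) ≠ 0 := by
      exact_mod_cast (Nat.factorial_pos (2*m'+1)).ne'
    rw [h4]
    push_cast
    have hpow1 : (μ^2/(μ^2+‖z‖^2))^(m'+1+1+m') = μ^(2*(2*m'+2))/(μ^2+‖z‖^2)^(2*m'+2) := by
      rw [show m'+1+1+m' = 2*m'+2 by omega, div_pow, ← pow_mul]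
    have hpow2 : (μ^2/(μ^2+‖z‖^2))^(m'+1+1+(m'+1)) = μ^(2*(2*m'+3))/(μ^2+‖z‖^2)^(2*m'+3) := by
      rw [show m'+1+1+(m'+1) = 2*m'+3 by omega, div_pow, ← pow_mul]
    rw [hpow1, hpow2]
    have e1 : μ^(2*(2*m'+2)) = μ^(2*(m'+1)) * μ^(2*(m'+1)) := by
      rw [show 2*(2*m'+2) = 2*(m'+1)+2*(m'+1) by omega, pow_add]
    have e2 : μ^(2*(2*m'+3)) = μ^(2*(m'+1)) * μ^(2*(m'+1)) * μ^2 := by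
      rw [show 2*(2*m'+3) = 2*(m'+1)+2*(m'+1)+2 by omega, pow_add, pow_add]
    have e3 : (μ^2+‖z‖^2)^(2*m'+3) = (μ^2+‖z‖^2)^(2*(m'+1)) * (μ^2+‖z‖^2) := by
      rw [show 2*m'+3 = 2*(m'+1)+1 by omega, pow_succ]
    have e4 : (μ^2+‖z‖^2)^(2*m'+2) = (μ^2+‖z‖^2)^(2*(m'+1)) := by
      rw [show 2*m'+2 = 2*(m'+1) by omega]
    have e5 : (2:ℝ)^(2*(m'+1)+1) = 2 * 2^(2*(m'+1)) := by
      rw [pow_succ]; ring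
    rw [e1, e2, e3, e4, e5]
    have hne3 : (μ^2+‖z‖^2)^(2*(m'+1)) ≠ 0 := pow_ne_zero _ hs
    have hne4 : μ^(2*(m'+1)) ≠ 0 := pow_ne_zero _ hμ0
    field_simp
    ring

end KernelAux
end

section
/- Let m ≥ 1 be an integer, μ > 0 and j ∈ {1,…,2m}. The function Y_j(z) = z_j/(μ² + |z|²) (where z_j is the j-th coordinate of z) is smooth on ℝ^{2m} and satisfies the linearized Liouville equation (−Δ)^m Y_j = 2^{2m+1} · m · (2m−1)! · μ^{2m} · (μ² + |z|²)^{−2m} · Y_j at every point of ℝ^{2m}. -/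
open MeasureTheory Real Filter
open scoped Topology

noncomputable section KernelAux

namespace KernelAux

variable {n : ℕ} (μ : ℝ)

abbrev E (n : ℕ) := EuclideanSpace ℝ (Fin n)

/-- `R k y = ((μ² + ‖y‖²)^k)⁻¹`. -/
def Rf (k : ℕ) (y : E n) : ℝ := ((μ ^ 2 + ‖y‖ ^ 2) ^ k)⁻¹

/-- `P j k y = y j * R k y`. -/
def Pf (j : Fin n) (k : ℕ) (y : E n) : ℝ := y j * Rf μ k y

/-- `Q a b k y = y a * y b * R k y`. -/
def Qf (a b : Fin n) (k : ℕ) (y : E n) : ℝ := y a * y b * Rf μ k y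

lemma rho_pos (hμ : 0 < μ) (y : E n) : 0 < μ ^ 2 + ‖y‖ ^ 2 :=
  add_pos_of_pos_of_nonneg (pow_pos hμ 2) (by positivity)

lemma hasFDerivAt_rho (x : E n) :
    HasFDerivAt (fun y : E n => μ ^ 2 + ‖y‖ ^ 2) ((2 : ℝ) • innerSL ℝ x) x := by
  have h := (hasStrictFDerivAt_norm_sq x).hasFDerivAt.const_add (μ ^ 2)
  refine h.congr_fderiv ?_
  ext v
  simp [two_smul]

lemma hasFDerivAt_Rf (hμ : 0 < μ) (k : ℕ) (x : E n) :
    HasFDerivAt (Rf μ k) ((-(2 * k) * Rf μ (k + 1) x) • innerSL ℝ x) x := by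
  have hρ : (0:ℝ) < μ ^ 2 + ‖x‖ ^ 2 := rho_pos μ hμ x
  have h1 : HasDerivAt (fun t : ℝ => (t ^ k)⁻¹)
      (-(↑k * (μ ^ 2 + ‖x‖ ^ 2) ^ (k - 1) * 1) / ((μ ^ 2 + ‖x‖ ^ 2) ^ k) ^ 2)
      (μ ^ 2 + ‖x‖ ^ 2) :=
    ((hasDerivAt_id _).pow k).inv (pow_ne_zero _ hρ.ne')
  have h2 := h1.comp_hasFDerivAt x (hasFDerivAt_rho μ x)
  refine h2.congr_fderiv ?_
  rw [smul_smul]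
  congr 1
  rcases Nat.eq_zero_or_pos k with hk | hk
  · subst hk; simp
  · have hk1 : k - 1 + (k + 1) = k * 2 := by omega
    unfold Rf
    rw [← pow_mul, ← hk1, pow_add]
    field_simp

end KernelAux

namespace KernelAux

variable {n : ℕ} (μ : ℝ)

/-- Derivative of `Pf`. -/
lemma hasFDerivAt_Pf (hμ : 0 < μ) (j : Fin n) (k : ℕ) (x : E n) :
    HasFDerivAt (Pf μ j k)
      (x j • ((-(2 * k) * Rf μ (k + 1) x) • innerSL ℝ x)
        + Rf μ k x • (EuclideanSpace.proj j : E n →L[ℝ] ℝ)) x := by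
  have h1 : HasFDerivAt (fun y : E n => y j)
      (EuclideanSpace.proj j : E n →L[ℝ] ℝ) x :=
    (EuclideanSpace.proj j : E n →L[ℝ] ℝ).hasFDerivAt
  exact h1.mul (hasFDerivAt_Rf μ hμ k x)

/-- Derivative of `Qf`. -/
lemma hasFDerivAt_Qf (hμ : 0 < μ) (a b : Fin n) (k : ℕ) (x : E n) :
    HasFDerivAt (Qf μ a b k)
      ((x a * x b) • ((-(2 * k) * Rf μ (k + 1) x) • innerSL ℝ x)
        + Rf μ k x • (x a • (EuclideanSpace.proj b : E n →L[ℝ] ℝ)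
            + x b • (EuclideanSpace.proj a : E n →L[ℝ] ℝ))) x := by
  have ha : HasFDerivAt (fun y : E n => y a)
      (EuclideanSpace.proj a : E n →L[ℝ] ℝ) x :=
    (EuclideanSpace.proj a : E n →L[ℝ] ℝ).hasFDerivAt
  have hb : HasFDerivAt (fun y : E n => y b)
      (EuclideanSpace.proj b : E n →L[ℝ] ℝ) x :=
    (EuclideanSpace.proj b : E n →L[ℝ] ℝ).hasFDerivAt
  exact (ha.mul hb).mul (hasFDerivAt_Rf μ hμ k x)

/-- First directional derivative of `Pf` in direction `single i 1`. -/
lemma fderiv_Pf_apply (hμ : 0 < μ) (j : Fin n) (k : ℕ) (i : Fin n) (y : E n) :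
    fderiv ℝ (Pf μ j k) y (EuclideanSpace.single i 1) =
      (if i = j then Rf μ k y else 0) - 2 * k * Qf μ j i (k + 1) y := by
  rw [(hasFDerivAt_Pf μ hμ j k y).fderiv]
  simp only [ContinuousLinearMap.add_apply, ContinuousLinearMap.smul_apply,
    innerSL_apply_apply, PiLp.proj_apply, EuclideanSpace.single_apply,
    smul_eq_mul, Qf]
  rw [real_inner_comm, EuclideanSpace.inner_single_left]
  push_cast
  rcases eq_or_ne i j with h | h
  · subst h; simp; ring
  · simp [h, Ne.symm h]; ring

end KernelAux

namespace KernelAux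

variable {n : ℕ} (μ : ℝ)

/-- The first partial derivative `∂_i (Pf j k)` as a function. -/
def Df (j : Fin n) (k : ℕ) (i : Fin n) (y : E n) : ℝ :=
  (if i = j then Rf μ k y else 0) - 2 * k * Qf μ j i (k + 1) y

lemma hasFDerivAt_Df (hμ : 0 < μ) (j : Fin n) (k : ℕ) (i : Fin n) (x : E n) :
    HasFDerivAt (Df μ j k i)
      ((if i = j then (1:ℝ) else 0) • ((-(2 * k) * Rf μ (k + 1) x) • innerSL ℝ x)
        + (-(2 * (k:ℝ))) • ((x j * x i) • ((-(2 * ((k+1:ℕ):ℝ)) * Rf μ (k + 2) x) • innerSL ℝ x)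
            + Rf μ (k + 1) x • (x j • (EuclideanSpace.proj i : E n →L[ℝ] ℝ)
                + x i • (EuclideanSpace.proj j : E n →L[ℝ] ℝ)))) x := by
  have h1 : Df μ j k i = fun y =>
      (if i = j then (1:ℝ) else 0) * Rf μ k y + (-(2 * k)) * Qf μ j i (k + 1) y := by
    funext y
    rcases eq_or_ne i j with h | h <;> simp [Df, h] <;> ring
  rw [h1]
  have h2 := ((hasFDerivAt_Rf μ hμ k x).const_mul (if i = j then (1:ℝ) else 0)).add
    ((hasFDerivAt_Qf μ hμ j i (k+1) x).const_mul (-(2 * (k:ℝ))))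
  exact h2

/-- Second directional derivative term. -/
lemma fderiv_Df_apply (hμ : 0 < μ) (j : Fin n) (k : ℕ) (i : Fin n) (x : E n) :
    fderiv ℝ (Df μ j k i) x (EuclideanSpace.single i 1) =
      (if i = j then (-(2 * (k:ℝ)) * Rf μ (k + 1) x) * x i else 0)
        + (-(2 * (k:ℝ))) * ((x j * x i) * ((-(2 * ((k:ℝ)+1)) * Rf μ (k + 2) x) * x i)
            + Rf μ (k + 1) x * (x j + x i * (if i = j then 1 else 0))) := by
  rw [(hasFDerivAt_Df μ hμ j k i x).fderiv]
  simp only [ContinuousLinearMap.add_apply, ContinuousLinearMap.smul_apply,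
    innerSL_apply_apply, PiLp.proj_apply, EuclideanSpace.single_apply, smul_eq_mul]
  rw [real_inner_comm, EuclideanSpace.inner_single_left]
  push_cast
  rcases eq_or_ne i j with h | h
  · subst h; simp; try ring
  · simp [h, Ne.symm h]; try ring

end KernelAux

namespace KernelAux

variable {n : ℕ} (μ : ℝ)

lemma norm_sq_eq_sum (x : E n) : ‖x‖ ^ 2 = ∑ i, x i * x i := by
  rw [← real_inner_self_eq_norm_sq]
  rfl

/-- The value of `Δ (Pf j k)` at `x`. -/
def lapPf (j : Fin n) (k : ℕ) (x : E n) : ℝ :=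
  -(2 * (k:ℝ)) * ((n:ℝ) + 2) * x j * Rf μ (k + 1) x
    + 4 * (k:ℝ) * ((k:ℝ) + 1) * x j * ‖x‖ ^ 2 * Rf μ (k + 2) x

lemma sum_term (j : Fin n) (k : ℕ) (x : E n) :
    ∑ i : Fin n, ((if i = j then (-(2 * (k:ℝ)) * Rf μ (k + 1) x) * x i else 0)
        + (-(2 * (k:ℝ))) * ((x j * x i) * ((-(2 * ((k:ℝ)+1)) * Rf μ (k + 2) x) * x i)
            + Rf μ (k + 1) x * (x j + x i * (if i = j then 1 else 0)))) =
      lapPf μ j k x := by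
  have h2 : ∀ i : Fin n, ((if i = j then (-(2 * (k:ℝ)) * Rf μ (k + 1) x) * x i else 0)
        + (-(2 * (k:ℝ))) * ((x j * x i) * ((-(2 * ((k:ℝ)+1)) * Rf μ (k + 2) x) * x i)
            + Rf μ (k + 1) x * (x j + x i * (if i = j then 1 else 0))))
      = (4 * (k:ℝ) * ((k:ℝ) + 1) * x j * Rf μ (k + 2) x) * (x i * x i)
        + ((-(2 * (k:ℝ))) * (Rf μ (k + 1) x * x j)
          + (if i = j then (-(4 * (k:ℝ))) * (Rf μ (k + 1) x * x i) else 0)) := by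
    intro i
    rcases eq_or_ne i j with h | h
    · subst h; simp; ring
    · simp [h]; ring
  rw [Finset.sum_congr rfl (fun i _ => h2 i)]
  rw [Finset.sum_add_distrib, Finset.sum_add_distrib, ← Finset.mul_sum, Finset.sum_const,
    Finset.sum_ite_eq' Finset.univ j _]
  simp only [Finset.mem_univ, if_true, Finset.card_univ, Fintype.card_fin, nsmul_eq_mul]
  rw [lapPf, norm_sq_eq_sum]
  ring

end KernelAux

end KernelAux

namespace KernelAux

variable {n : ℕ} (μ : ℝ)

/-- Laplacian of a finite linear combination of the `Pf`. -/
lemma lap_comb (hμ : 0 < μ) (j : Fin n) {ι : Type*} (s : Finset ι) (c : ι → ℝ) (κ : ι → ℕ)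
    (x : E n) :
    lap (fun y => ∑ t ∈ s, c t * Pf μ j (κ t) y) x = ∑ t ∈ s, c t * lapPf μ j (κ t) x := by
  unfold lap
  have key : ∀ i : Fin n,
      fderiv ℝ (fun y => fderiv ℝ (fun y' => ∑ t ∈ s, c t * Pf μ j (κ t) y') y
          (EuclideanSpace.single i 1)) x (EuclideanSpace.single i 1)
        = ∑ t ∈ s, c t * ((if i = j then (-(2 * ((κ t):ℝ)) * Rf μ (κ t + 1) x) * x i else 0)
            + (-(2 * ((κ t):ℝ))) * ((x j * x i) * ((-(2 * (((κ t):ℝ)+1)) * Rf μ (κ t + 2) x) * x i)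
              + Rf μ (κ t + 1) x * (x j + x i * (if i = j then 1 else 0)))) := by
    intro i
    have e1 : (fun y => fderiv ℝ (fun y' => ∑ t ∈ s, c t * Pf μ j (κ t) y') y
        (EuclideanSpace.single i 1)) = fun y => ∑ t ∈ s, c t * Df μ j (κ t) i y := by
      funext y
      have h := HasFDerivAt.fun_sum (u := s)
        (fun t _ => (hasFDerivAt_Pf μ hμ j (κ t) y).const_mul (c t))
      rw [h.fderiv, ContinuousLinearMap.sum_apply]
      refine Finset.sum_congr rfl fun t _ => ?_
      rw [ContinuousLinearMap.smul_apply, smul_eq_mul]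
      congr 1
      rw [← (hasFDerivAt_Pf μ hμ j (κ t) y).fderiv]
      exact fderiv_Pf_apply μ hμ j (κ t) i y
    rw [e1]
    have h2 := HasFDerivAt.fun_sum (u := s)
      (fun t _ => (hasFDerivAt_Df μ hμ j (κ t) i x).const_mul (c t))
    rw [h2.fderiv, ContinuousLinearMap.sum_apply]
    refine Finset.sum_congr rfl fun t _ => ?_
    rw [ContinuousLinearMap.smul_apply, smul_eq_mul]
    congr 1
    rw [← (hasFDerivAt_Df μ hμ j (κ t) i x).fderiv]
    exact fderiv_Df_apply μ hμ j (κ t) i x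
  rw [Finset.sum_congr rfl fun i _ => key i, Finset.sum_comm]
  refine Finset.sum_congr rfl fun t _ => ?_
  rw [← Finset.mul_sum, sum_term μ j (κ t) x]

end KernelAux

namespace KernelAux

variable (μ : ℝ)

lemma normsq_Rf {n : ℕ} (hμ : 0 < μ) (k : ℕ) (x : E n) :
    ‖x‖ ^ 2 * Rf μ (k + 2) x = Rf μ (k + 1) x - μ ^ 2 * Rf μ (k + 2) x := by
  have hρ : (0:ℝ) < μ ^ 2 + ‖x‖ ^ 2 := rho_pos μ hμ x
  unfold Rf
  field_simp
  ring

/-- On `ℝ^{2m}`, `-Δ (Pf j k) = 4k(m-k) Pf j (k+1) + 4k(k+1) μ² Pf j (k+2)`. -/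
lemma neg_lapPf {m : ℕ} (hμ : 0 < μ) (j : Fin (2 * m)) (k : ℕ) (x : E (2 * m)) :
    -lapPf μ j k x = 4 * (k:ℝ) * ((m:ℝ) - k) * Pf μ j (k + 1) x
      + 4 * (k:ℝ) * ((k:ℝ) + 1) * μ ^ 2 * Pf μ j (k + 2) x := by
  unfold lapPf Pf
  have h := normsq_Rf μ hμ k x
  push_cast
  linear_combination (-(4 * (k:ℝ) * ((k:ℝ) + 1) * x j)) * h

/-- The coefficients `c_{p,i} = 4^p C(p,i) (p+i)! ∏_{t=i+1}^p (m-t)`. -/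
def cc (m p i : ℕ) : ℝ :=
  4 ^ p * (p.choose i) * ((p + i).factorial) * ∏ t ∈ Finset.Icc (i + 1) p, ((m:ℝ) - t)

lemma cc_zero (m : ℕ) : cc m 0 0 = 1 := by simp [cc]

lemma cc_of_lt (m : ℕ) {p i : ℕ} (h : p < i) : cc m p i = 0 := by
  simp [cc, Nat.choose_eq_zero_of_lt h]

lemma cc_rec0 (m p : ℕ) :
    cc m (p + 1) 0 = 4 * ((p:ℝ) + 1) * ((m:ℝ) - ((p:ℝ) + 1)) * cc m p 0 := by
  unfold cc
  rw [Finset.prod_Icc_succ_top (by omega : 1 ≤ p + 1)]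
  simp only [Nat.choose_zero_right, Nat.add_zero, Nat.factorial_succ]
  push_cast
  ring

lemma cc_rec (m p i : ℕ) :
    cc m (p + 1) (i + 1) = 4 * ((p:ℝ) + (i:ℝ) + 2) * ((m:ℝ) - ((p:ℝ) + (i:ℝ) + 2)) * cc m p (i + 1)
      + 4 * ((p:ℝ) + (i:ℝ) + 1) * ((p:ℝ) + (i:ℝ) + 2) * cc m p i := by
  rcases lt_or_ge p i with hpi | hip
  · -- p < i : everything vanishes
    rw [cc_of_lt m (by omega : p + 1 < i + 1), cc_of_lt m (by omega : p < i + 1),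
      cc_of_lt m hpi]
    ring
  · rcases eq_or_lt_of_le hip with heq | hlt
    · -- i = p
      subst heq
      rw [cc_of_lt m (by omega : i < i + 1)]
      unfold cc
      rw [Finset.Icc_eq_empty (by omega), Finset.Icc_eq_empty (by omega)]
      simp only [Finset.prod_empty, Nat.choose_self, mul_one]
      have : (i + 1 + (i + 1)).factorial = (i + i + 2) * ((i + i + 1) * (i + i).factorial) := by
        rw [show i + 1 + (i + 1) = (i + i + 1) + 1 by omega, Nat.factorial_succ,
          Nat.factorial_succ]
      rw [this]
      push_cast
      ring
    · -- i + 1 ≤ p : main case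
      have h1 : ∏ t ∈ Finset.Icc (i + 2) (p + 1), ((m:ℝ) - t)
          = (∏ t ∈ Finset.Icc (i + 2) p, ((m:ℝ) - t)) * ((m:ℝ) - (p + 1)) := by
        rw [Finset.prod_Icc_succ_top (by omega : i + 2 ≤ p + 1)]
        push_cast; ring
      have h2 : ∏ t ∈ Finset.Icc (i + 1) p, ((m:ℝ) - t)
          = ((m:ℝ) - ((i:ℝ) + 1)) * ∏ t ∈ Finset.Icc (i + 2) p, ((m:ℝ) - t) := by
        rw [← Finset.Ico_add_one_right_eq_Icc, ← Finset.Ico_add_one_right_eq_Icc,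
          Finset.prod_eq_prod_Ico_succ_bot (by omega : i + 1 < p + 1)]
        push_cast; ring
      have hchoose : ((p + 1).choose (i + 1) : ℝ) = (p.choose i : ℝ) + (p.choose (i + 1) : ℝ) := by
        rw [Nat.choose_succ_succ]; push_cast; ring
      have hb : ((p.choose (i + 1)) : ℝ) * ((i:ℝ) + 1) = ((p.choose i) : ℝ) * ((p:ℝ) - (i:ℝ)) := by
        have := Nat.choose_succ_right_eq p i
        have hc : ((p - i : ℕ) : ℝ) = (p:ℝ) - (i:ℝ) := by
          rw [Nat.cast_sub (le_of_lt hlt)]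
        calc ((p.choose (i + 1)) : ℝ) * ((i:ℝ) + 1)
            = ((p.choose (i + 1) * (i + 1) : ℕ) : ℝ) := by push_cast; ring
          _ = ((p.choose i * (p - i) : ℕ) : ℝ) := by rw [this]
          _ = ((p.choose i) : ℝ) * ((p:ℝ) - (i:ℝ)) := by push_cast [Nat.cast_sub (le_of_lt hlt)]; ring
      unfold cc
      rw [show i + 1 + 1 = i + 2 by omega, h1, h2, hchoose]
      have hf1 : ((p + 1 + (i + 1)).factorial : ℝ)
          = ((p:ℝ) + (i:ℝ) + 2) * (((p:ℝ) + (i:ℝ) + 1) * ((p + i).factorial : ℝ)) := by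
        rw [show p + 1 + (i + 1) = (p + i + 1) + 1 by omega, Nat.factorial_succ, Nat.factorial_succ]
        push_cast; ring
      have hf2 : ((p + (i + 1)).factorial : ℝ) = ((p:ℝ) + (i:ℝ) + 1) * ((p + i).factorial : ℝ) := by
        rw [show p + (i + 1) = (p + i) + 1 by omega, Nat.factorial_succ]
        push_cast; ring
      rw [hf1, hf2]
      linear_combination (4 ^ (p + 1) * ((p:ℝ) + (i:ℝ) + 2) * (((p:ℝ) + (i:ℝ) + 1)) *
        ((p + i).factorial : ℝ) * (∏ t ∈ Finset.Icc (i + 2) p, ((m:ℝ) - t))) * hb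

end KernelAux

namespace KernelAux

lemma negLapPow_eq (m : ℕ) (μ : ℝ) (hμ : 0 < μ) (j : Fin (2 * m)) (p : ℕ) :
    negLapPow p (Pf μ j 1)
      = fun x => ∑ i ∈ Finset.range (p + 1), cc m p i * μ ^ (2 * i) * Pf μ j (p + 1 + i) x := by
  induction p with
  | zero =>
    funext x
    simp [negLapPow, cc_zero]
  | succ p ih =>
    have hstep : negLapPow (p + 1) (Pf μ j 1)
        = fun x => -lap (negLapPow p (Pf μ j 1)) x := by
      funext x
      show ((fun g x => -lap g x)^[p + 1] (Pf μ j 1)) x = _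
      rw [Function.iterate_succ_apply']
      rfl
    rw [hstep, ih]
    funext x
    rw [lap_comb μ hμ j (Finset.range (p + 1)) (fun i => cc m p i * μ ^ (2 * i))
      (fun i => p + 1 + i) x]
    rw [← Finset.sum_neg_distrib]
    have hterm : ∀ i ∈ Finset.range (p + 1),
        -(cc m p i * μ ^ (2 * i) * lapPf μ j (p + 1 + i) x)
          = (cc m p i * μ ^ (2 * i) * (4 * ((p + 1 + i : ℕ) : ℝ)
                * ((m : ℝ) - ((p + 1 + i : ℕ) : ℝ))) * Pf μ j (p + 2 + i) x)
            + (cc m p i * μ ^ (2 * i) * (4 * ((p + 1 + i : ℕ) : ℝ)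
                * (((p + 1 + i : ℕ) : ℝ) + 1)) * μ ^ 2 * Pf μ j (p + 3 + i) x) := by
      intro i _
      have h := neg_lapPf μ hμ j (p + 1 + i) x
      rw [show p + 1 + i + 1 = p + 2 + i by omega, show p + 1 + i + 2 = p + 3 + i by omega] at h
      rw [neg_eq_iff_eq_neg] at h
      rw [h]
      ring
    rw [Finset.sum_congr rfl hterm, Finset.sum_add_distrib]
    rw [Finset.sum_range_succ' (fun i => cc m p i * μ ^ (2 * i) * (4 * ((p + 1 + i : ℕ) : ℝ)
      * ((m : ℝ) - ((p + 1 + i : ℕ) : ℝ))) * Pf μ j (p + 2 + i) x) p]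
    have hA : ∑ i ∈ Finset.range p, (cc m p (i + 1) * μ ^ (2 * (i + 1))
          * (4 * ((p + 1 + (i + 1) : ℕ) : ℝ) * ((m : ℝ) - ((p + 1 + (i + 1) : ℕ) : ℝ)))
          * Pf μ j (p + 2 + (i + 1)) x)
        = ∑ i ∈ Finset.range (p + 1), (cc m p (i + 1) * μ ^ (2 * (i + 1))
          * (4 * ((p + 1 + (i + 1) : ℕ) : ℝ) * ((m : ℝ) - ((p + 1 + (i + 1) : ℕ) : ℝ)))
          * Pf μ j (p + 2 + (i + 1)) x) := by
      rw [Finset.sum_range_succ]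
      rw [cc_of_lt m (by omega : p < p + 1)]
      ring
    rw [hA]
    rw [Finset.sum_range_succ' (fun i => cc m (p + 1) i * μ ^ (2 * i) * Pf μ j (p + 1 + 1 + i) x)
      (p + 1)]
    have hfin : ∀ i ∈ Finset.range (p + 1),
        (cc m p (i + 1) * μ ^ (2 * (i + 1))
            * (4 * ((p + 1 + (i + 1) : ℕ) : ℝ) * ((m : ℝ) - ((p + 1 + (i + 1) : ℕ) : ℝ)))
            * Pf μ j (p + 2 + (i + 1)) x)
          + (cc m p i * μ ^ (2 * i) * (4 * ((p + 1 + i : ℕ) : ℝ)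
              * (((p + 1 + i : ℕ) : ℝ) + 1)) * μ ^ 2 * Pf μ j (p + 3 + i) x)
          = cc m (p + 1) (i + 1) * μ ^ (2 * (i + 1)) * Pf μ j (p + 1 + 1 + (i + 1)) x := by
      intro i _
      rw [cc_rec m p i]
      rw [show p + 2 + (i + 1) = p + 3 + i by omega]
      push_cast
      ring
    calc (∑ i ∈ Finset.range (p + 1), cc m p (i + 1) * μ ^ (2 * (i + 1))
            * (4 * ((p + 1 + (i + 1) : ℕ) : ℝ) * ((m : ℝ) - ((p + 1 + (i + 1) : ℕ) : ℝ)))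
            * Pf μ j (p + 2 + (i + 1)) x)
          + (cc m p 0 * μ ^ (2 * 0) * (4 * ((p + 1 + 0 : ℕ) : ℝ)
            * ((m : ℝ) - ((p + 1 + 0 : ℕ) : ℝ))) * Pf μ j (p + 2 + 0) x)
          + ∑ i ∈ Finset.range (p + 1), (cc m p i * μ ^ (2 * i) * (4 * ((p + 1 + i : ℕ) : ℝ)
              * (((p + 1 + i : ℕ) : ℝ) + 1)) * μ ^ 2 * Pf μ j (p + 3 + i) x)
        = (∑ i ∈ Finset.range (p + 1),
            ((cc m p (i + 1) * μ ^ (2 * (i + 1))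
              * (4 * ((p + 1 + (i + 1) : ℕ) : ℝ) * ((m : ℝ) - ((p + 1 + (i + 1) : ℕ) : ℝ)))
              * Pf μ j (p + 2 + (i + 1)) x)
            + (cc m p i * μ ^ (2 * i) * (4 * ((p + 1 + i : ℕ) : ℝ)
                * (((p + 1 + i : ℕ) : ℝ) + 1)) * μ ^ 2 * Pf μ j (p + 3 + i) x)))
          + (cc m p 0 * μ ^ (2 * 0) * (4 * ((p + 1 + 0 : ℕ) : ℝ)
            * ((m : ℝ) - ((p + 1 + 0 : ℕ) : ℝ))) * Pf μ j (p + 2 + 0) x) := by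
          rw [Finset.sum_add_distrib]; ring
      _ = (∑ i ∈ Finset.range (p + 1),
            cc m (p + 1) (i + 1) * μ ^ (2 * (i + 1)) * Pf μ j (p + 1 + 1 + (i + 1)) x)
          + cc m (p + 1) 0 * μ ^ (2 * 0) * Pf μ j (p + 1 + 1 + 0) x := by
          rw [Finset.sum_congr rfl hfin]
          congr 1
          rw [cc_rec0 m p]
          rw [show p + 2 + 0 = p + 1 + 1 + 0 by omega]
          push_cast
          ring

end KernelAux

namespace KernelAux

lemma cc_final_zero (m i : ℕ) (h : i < m) : cc m m i = 0 := by
  unfold cc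
  have hmem : m ∈ Finset.Icc (i + 1) m := Finset.mem_Icc.mpr ⟨by omega, le_rfl⟩
  rw [Finset.prod_eq_zero hmem (by simp)]
  ring

lemma cc_final (m : ℕ) : cc m m m = 4 ^ m * ((2 * m).factorial : ℝ) := by
  unfold cc
  rw [Finset.Icc_eq_empty (by omega)]
  simp only [Finset.prod_empty, Nat.choose_self, Nat.cast_one, mul_one]
  rw [show m + m = 2 * m by omega]

end KernelAux


/-- The translational kernel elements `Y_j(z) = z_j/(μ² + |z|²)` of the linearized
Liouville operator at the standard bubble. -/
theorem kernel_element_translation (m : ℕ) (hm : 1 ≤ m) (μ : ℝ) (hμ : 0 < μ)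
    (j : Fin (2 * m)) :
    ContDiff ℝ (⊤ : ℕ∞) (fun z : EuclideanSpace ℝ (Fin (2 * m)) =>
        z j / (μ ^ 2 + ‖z‖ ^ 2)) ∧
      ∀ z, negLapPow m (fun z : EuclideanSpace ℝ (Fin (2 * m)) =>
          z j / (μ ^ 2 + ‖z‖ ^ 2)) z =
        2 ^ (2 * m + 1) * m * Nat.factorial (2 * m - 1) * μ ^ (2 * m) *
          ((μ ^ 2 + ‖z‖ ^ 2) ^ (2 * m))⁻¹ * (z j / (μ ^ 2 + ‖z‖ ^ 2)) := by
  have hfun : (fun z : EuclideanSpace ℝ (Fin (2 * m)) => z j / (μ ^ 2 + ‖z‖ ^ 2))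
      = KernelAux.Pf μ j 1 := by
    funext z
    rw [KernelAux.Pf, KernelAux.Rf, pow_one, div_eq_mul_inv]
  constructor
  · exact ((EuclideanSpace.proj j :
        EuclideanSpace ℝ (Fin (2 * m)) →L[ℝ] ℝ).contDiff).div
      (contDiff_const.add (contDiff_norm_sq ℝ))
      (fun z => (KernelAux.rho_pos μ hμ z).ne')
  · intro z
    rw [hfun, congrFun (KernelAux.negLapPow_eq m μ hμ j m) z]
    rw [Finset.sum_range_succ]
    rw [Finset.sum_eq_zero (fun i hi => by
      rw [KernelAux.cc_final_zero m i (Finset.mem_range.mp hi)]; ring)]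
    rw [zero_add, KernelAux.cc_final m]
    rw [show m + 1 + m = 2 * m + 1 by omega]
    unfold KernelAux.Pf KernelAux.Rf
    have hρ : (0:ℝ) < μ ^ 2 + ‖z‖ ^ 2 := KernelAux.rho_pos μ hμ z
    have hfac : ((2 * m).factorial : ℝ) = (2 * (m:ℝ)) * (((2 * m - 1).factorial : ℕ) : ℝ) := by
      rw [show 2 * m = (2 * m - 1) + 1 by omega, Nat.factorial_succ]
      push_cast [show (2 * m - 1 : ℕ) + 1 = 2 * m by omega]
      ring
    rw [hfac]
    rw [show (4:ℝ) = 2 ^ 2 by norm_num, ← pow_mul]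
    rw [pow_succ (μ ^ 2 + ‖z‖ ^ 2) (2 * m)]
    field_simp
    ring_nf
    try tauto
end
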